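/- arXiv:1011.0277 — 4 statements merged into one kernel-verified Lean document; each statement's English description precedes it below -/
import Mathlib

section
/- Let F = F(t,x,φ) be an ansatz on I × J × W constructed with the operator Q, i.e., det Φ ≠ 0 everywhere and ∂ₓ^ρ F(t,x,φ) = η̌(t, x, F(t,x,φ), ∂ₓF(t,x,φ), …, ∂ₓ^{ρ−1}F(t,x,φ)) for all (t,x,φ) in the domain. Then the determining equation D̂ₜη̌ = D̂ₓ^ρĤ holds at every point (t, x, F(t,x,φ), ∂ₓF(t,x,φ), …, ∂ₓ^{ρ−1}F(t,x,φ)) with (t,x,φ) in the domain if and only if each of the functions Gᵃ := Σ_b (Φ^{-1})^{ab} ∂ₓ^{b−1}(H̃ − ∂ₜF) is independent of x, i.e., if and only if the ansatz reduces E to a normal system of ρ first-order ordinary differential equations dφᵃ/dt = Gᵃ(t, φ). -/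
noncomputable section

/-- Partial derivative with respect to `t`. -/
def pT (ρ : ℕ) (g : ℝ × ℝ × (Fin ρ → ℝ) → ℝ) (p : ℝ × ℝ × (Fin ρ → ℝ)) : ℝ :=
  deriv (fun s => g (s, p.2)) p.1

/-- Partial derivative with respect to `x`. -/
def pX (ρ : ℕ) (g : ℝ × ℝ × (Fin ρ → ℝ) → ℝ) (p : ℝ × ℝ × (Fin ρ → ℝ)) : ℝ :=
  deriv (fun s => g (p.1, s, p.2.2)) p.2.1

/-- Partial derivative with respect to the coordinate `v^a`. -/
def pV (ρ : ℕ) (a : Fin ρ) (g : ℝ × ℝ × (Fin ρ → ℝ) → ℝ) (p : ℝ × ℝ × (Fin ρ → ℝ)) : ℝ :=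
  deriv (fun s => g (p.1, p.2.1, Function.update p.2.2 a s)) (p.2.2 a)

/-- The coefficient of `∂_{v^a}` in the vector field `D̂ₓ`:
`v^{a+1}` for `a < ρ - 1` and `η̌` for `a = ρ - 1`. -/
def dxCoeff (ρ : ℕ) (η : ℝ × ℝ × (Fin ρ → ℝ) → ℝ) (p : ℝ × ℝ × (Fin ρ → ℝ)) (a : Fin ρ) : ℝ :=
  if h : (a : ℕ) + 1 < ρ then p.2.2 ⟨(a : ℕ) + 1, h⟩ else η p

/-- The restricted total derivative `D̂ₓ` acting on functions of `(t, x, v⁰, …, v^{ρ-1})`. -/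
def DX (ρ : ℕ) (η g : ℝ × ℝ × (Fin ρ → ℝ) → ℝ) : ℝ × ℝ × (Fin ρ → ℝ) → ℝ :=
  fun p => pX ρ g p + ∑ a : Fin ρ, dxCoeff ρ η p a * pV ρ a g p

/-- `Ĥ(t,x,v⁰,…,v^{ρ-1})`: the right-hand side `H` with `u_i` replaced by `v^i` for `i < ρ`
and by `D̂ₓ^{i-ρ} η̌` for `i ≥ ρ`.  This covers both cases `ρ > r` and `ρ ≤ r`. -/
def Hhat (ρ r : ℕ) (H : ℝ × ℝ × (Fin (r + 1) → ℝ) → ℝ)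
    (η : ℝ × ℝ × (Fin ρ → ℝ) → ℝ) : ℝ × ℝ × (Fin ρ → ℝ) → ℝ :=
  fun p => H (p.1, p.2.1, fun i =>
    if h : (i : ℕ) < ρ then p.2.2 ⟨(i : ℕ), h⟩ else (DX ρ η)^[(i : ℕ) - ρ] η p)

/-- The restricted total derivative `D̂ₜ` acting on functions of `(t, x, v⁰, …, v^{ρ-1})`. -/
def DT (ρ r : ℕ) (H : ℝ × ℝ × (Fin (r + 1) → ℝ) → ℝ)
    (η g : ℝ × ℝ × (Fin ρ → ℝ) → ℝ) : ℝ × ℝ × (Fin ρ → ℝ) → ℝ :=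
  fun p => pT ρ g p + ∑ b : Fin ρ, (DX ρ η)^[(b : ℕ)] (Hhat ρ r H η) p * pV ρ b g p

/-- `u` solves the evolution equation `uₜ = H(t, x, u, ∂ₓu, …, ∂ₓ^r u)` on the set `s`. -/
def SolvesE (r : ℕ) (H : ℝ × ℝ × (Fin (r + 1) → ℝ) → ℝ) (u : ℝ → ℝ → ℝ)
    (s : Set (ℝ × ℝ)) : Prop :=
  ∀ q ∈ s, deriv (fun t => u t q.2) q.1
    = H (q.1, q.2, fun i => deriv^[(i : ℕ)] (u q.1) q.2)

/-- `u` is `Q`-invariant: `∂ₓ^ρ u = η̌(t, x, u, ∂ₓu, …, ∂ₓ^{ρ-1}u)` on the set `s`. -/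
def QInvariant (ρ : ℕ) (η : ℝ × ℝ × (Fin ρ → ℝ) → ℝ) (u : ℝ → ℝ → ℝ)
    (s : Set (ℝ × ℝ)) : Prop :=
  ∀ q ∈ s, deriv^[ρ] (u q.1) q.2 = η (q.1, q.2, fun a => deriv^[(a : ℕ)] (u q.1) q.2)

/-- The Jacobian-type matrix with entries `∂_{κ_b} ∂ₓ^{a-1} f` (indices `a, b = 1, …, ρ`),
evaluated at `p = (t, x, κ)`. -/
def famJac (ρ : ℕ) (f : ℝ × ℝ × (Fin ρ → ℝ) → ℝ) (p : ℝ × ℝ × (Fin ρ → ℝ)) :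
    Matrix (Fin ρ) (Fin ρ) ℝ :=
  Matrix.of fun a b =>
    deriv (fun s => deriv^[(a : ℕ)] (fun y => f (p.1, y, Function.update p.2.2 b s)) p.2.1)
      (p.2.2 b)

/-- `H̃(t,x,φ) = H(t, x, F, ∂ₓF, …, ∂ₓ^r F)`. -/
def tildeH (ρ r : ℕ) (H : ℝ × ℝ × (Fin (r + 1) → ℝ) → ℝ)
    (F : ℝ × ℝ × (Fin ρ → ℝ) → ℝ) (p : ℝ × ℝ × (Fin ρ → ℝ)) : ℝ :=
  H (p.1, p.2.1, fun i => deriv^[(i : ℕ)] (fun x => F (p.1, x, p.2.2)) p.2.1)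

/-- The right-hand sides `Gᵃ = Σ_b (Φ⁻¹)^{ab} ∂ₓ^{b-1}(H̃ − ∂ₜF)` of the reduced system. -/
def redRHS (ρ r : ℕ) (H : ℝ × ℝ × (Fin (r + 1) → ℝ) → ℝ)
    (F : ℝ × ℝ × (Fin ρ → ℝ) → ℝ) (a : Fin ρ) (p : ℝ × ℝ × (Fin ρ → ℝ)) : ℝ :=
  ∑ b : Fin ρ, (famJac ρ F p)⁻¹ a b *
    deriv^[(b : ℕ)]
      (fun x => tildeH ρ r H F (p.1, x, p.2.2) - deriv (fun s => F (s, x, p.2.2)) p.1)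
      p.2.1

/-- The jet map `(t, x, φ) ↦ (t, x, F, ∂ₓF, …, ∂ₓ^{ρ-1}F)`. -/
def jetMap (ρ : ℕ) (F : ℝ × ℝ × (Fin ρ → ℝ) → ℝ)
    (p : ℝ × ℝ × (Fin ρ → ℝ)) : ℝ × ℝ × (Fin ρ → ℝ) :=
  (p.1, p.2.1, fun a => deriv^[(a : ℕ)] (fun x => F (p.1, x, p.2.2)) p.2.1)

open scoped ContDiff Matrix

namespace S9

abbrev EE (ρ : ℕ) : Type := ℝ × ℝ × (Fin ρ → ℝ)

variable {ρ : ℕ}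

def eT {ρ : ℕ} : EE ρ := (1, 0, 0)
def eX {ρ : ℕ} : EE ρ := (0, 1, 0)
def eV {ρ : ℕ} (a : Fin ρ) : EE ρ := (0, 0, Pi.single a 1)

def pd (v : EE ρ) (f : EE ρ → ℝ) (p : EE ρ) : ℝ := fderiv ℝ f p v

lemma infty_add_one : (∞ : WithTop ℕ∞) + 1 ≤ ∞ := by norm_num

lemma one_le_infty : (1 : WithTop ℕ∞) ≤ ∞ := by norm_num

lemma two_le_infty : (2 : WithTop ℕ∞) ≤ ∞ := WithTop.coe_le_coe.mpr le_top

variable {s : Set (EE ρ)} {f g : EE ρ → ℝ} {p : EE ρ}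

lemma pd_smooth (hs : IsOpen s) (hf : ContDiffOn ℝ ∞ f s) (v : EE ρ) :
    ContDiffOn ℝ ∞ (pd v f) s :=
  (ContinuousLinearMap.apply ℝ ℝ v).contDiff.comp_contDiffOn
    (hf.fderiv_of_isOpen hs infty_add_one)

lemma pd_smooth_global (hf : ContDiff ℝ ∞ f) (v : EE ρ) : ContDiff ℝ ∞ (pd v f) :=
  (ContinuousLinearMap.apply ℝ ℝ v).contDiff.comp (hf.fderiv_right infty_add_one)

lemma diffAt {F' : Type*} [NormedAddCommGroup F'] [NormedSpace ℝ F'] {f : EE ρ → F'}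
    (hs : IsOpen s) (hf : ContDiffOn ℝ ∞ f s) (hp : p ∈ s) :
    DifferentiableAt ℝ f p :=
  (hf.contDiffAt (hs.mem_nhds hp)).differentiableAt (by simp)

lemma hasDerivAt_tline (x : ℝ) (v : Fin ρ → ℝ) (t : ℝ) :
    HasDerivAt (fun τ : ℝ => ((τ, x, v) : EE ρ)) eT t :=
  (hasDerivAt_id t).prodMk ((hasDerivAt_const t x).prodMk (hasDerivAt_const t v))

lemma hasDerivAt_xline (t : ℝ) (v : Fin ρ → ℝ) (x : ℝ) :
    HasDerivAt (fun y : ℝ => ((t, y, v) : EE ρ)) eX x :=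
  (hasDerivAt_const x t).prodMk ((hasDerivAt_id x).prodMk (hasDerivAt_const x v))

lemma hasDerivAt_update (w : Fin ρ → ℝ) (a : Fin ρ) (y : ℝ) :
    HasDerivAt (fun s : ℝ => Function.update w a s) (Pi.single a 1) y := by
  rw [hasDerivAt_pi]
  intro b
  rcases eq_or_ne b a with rfl | hb
  · simpa using hasDerivAt_id' y
  · simpa [Function.update_of_ne hb, Pi.single_eq_of_ne hb] using hasDerivAt_const y (w b)

lemma hasDerivAt_vline (t x : ℝ) (w : Fin ρ → ℝ) (a : Fin ρ) (y : ℝ) :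
    HasDerivAt (fun s : ℝ => ((t, x, Function.update w a s) : EE ρ)) (eV a) y :=
  (hasDerivAt_const y t).prodMk ((hasDerivAt_const y x).prodMk (hasDerivAt_update w a y))

lemma hasDerivAt_sliceX (hf : DifferentiableAt ℝ f p) :
    HasDerivAt (fun x => f (p.1, x, p.2.2)) (pd eX f p) p.2.1 :=
  hf.hasFDerivAt.comp_hasDerivAt p.2.1 (hasDerivAt_xline p.1 p.2.2 p.2.1)

lemma hasDerivAt_sliceT (hf : DifferentiableAt ℝ f p) :
    HasDerivAt (fun τ => f (τ, p.2.1, p.2.2)) (pd eT f p) p.1 :=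
  hf.hasFDerivAt.comp_hasDerivAt p.1 (hasDerivAt_tline p.2.1 p.2.2 p.1)

lemma hasDerivAt_sliceV (hf : DifferentiableAt ℝ f p) (a : Fin ρ) :
    HasDerivAt (fun y => f (p.1, p.2.1, Function.update p.2.2 a y)) (pd (eV a) f p)
      (p.2.2 a) :=
  hf.hasFDerivAt.comp_hasDerivAt_of_eq (p.2.2 a)
    (hasDerivAt_vline p.1 p.2.1 p.2.2 a (p.2.2 a)) (by simp [Function.update_eq_self])

lemma sum_smul_eV (w : Fin ρ → ℝ) :
    (∑ a : Fin ρ, w a • eV (ρ := ρ) a) = ((0:ℝ), (0:ℝ), w) := by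
  unfold eV
  rw [Prod.ext_iff, Prod.ext_iff]
  refine ⟨?_, ?_, ?_⟩
  · rw [Prod.fst_sum]; simp
  · rw [Prod.snd_sum, Prod.fst_sum]; simp
  · rw [Prod.snd_sum, Prod.snd_sum]
    funext b
    simp [Finset.sum_apply, Pi.single_apply]

lemma fderiv_dir_decompX (f : EE ρ → ℝ) (p : EE ρ) (w : Fin ρ → ℝ) :
    fderiv ℝ f p ((0:ℝ), (1:ℝ), w) = pd eX f p + ∑ a, w a * pd (eV a) f p := by
  have h1 : ((0:ℝ), (1:ℝ), w) = eX + ∑ a : Fin ρ, w a • eV a := by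
    rw [sum_smul_eV]; unfold eX; simp [Prod.mk_add_mk]
  rw [h1, map_add, map_sum]
  simp [pd, smul_eq_mul]

lemma fderiv_dir_decompT (f : EE ρ → ℝ) (p : EE ρ) (w : Fin ρ → ℝ) :
    fderiv ℝ f p ((1:ℝ), (0:ℝ), w) = pd eT f p + ∑ a, w a * pd (eV a) f p := by
  have h1 : ((1:ℝ), (0:ℝ), w) = eT + ∑ a : Fin ρ, w a • eV a := by
    rw [sum_smul_eV]; unfold eT; simp [Prod.mk_add_mk]
  rw [h1, map_add, map_sum]
  simp [pd, smul_eq_mul]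

lemma fderiv_dir_decompV (f : EE ρ → ℝ) (p : EE ρ) (w : Fin ρ → ℝ) :
    fderiv ℝ f p ((0:ℝ), (0:ℝ), w) = ∑ a, w a * pd (eV a) f p := by
  rw [← sum_smul_eV, map_sum]
  simp [pd, smul_eq_mul]

lemma pd_pd (hs : IsOpen s) (hf : ContDiffOn ℝ ∞ f s) (hp : p ∈ s) (u w : EE ρ) :
    pd u (pd w f) p = fderiv ℝ (fderiv ℝ f) p u w := by
  have hd : DifferentiableAt ℝ (fderiv ℝ f) p :=
    diffAt hs (hf.fderiv_of_isOpen hs infty_add_one) hp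
  have h : HasFDerivAt (fun q => fderiv ℝ f q w)
      ((ContinuousLinearMap.apply ℝ ℝ w).comp (fderiv ℝ (fderiv ℝ f) p)) p :=
    (ContinuousLinearMap.apply ℝ ℝ w).hasFDerivAt.comp p hd.hasFDerivAt
  show fderiv ℝ (fun q => fderiv ℝ f q w) p u = _
  rw [h.fderiv]
  rfl

lemma pd_comm (hs : IsOpen s) (hf : ContDiffOn ℝ ∞ f s) (hp : p ∈ s) (v w : EE ρ) :
    pd v (pd w f) p = pd w (pd v f) p := by
  rw [pd_pd hs hf hp, pd_pd hs hf hp]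
  exact (hf.contDiffAt (hs.mem_nhds hp)).isSymmSndFDerivAt (by rw [minSmoothness_of_isRCLikeNormedField]; exact two_le_infty) v w

lemma pd_congr_on (hs : IsOpen s) (h : Set.EqOn f g s) (hp : p ∈ s) (v : EE ρ) :
    pd v f p = pd v g p := by
  unfold pd
  rw [Filter.EventuallyEq.fderiv_eq (Filter.eventuallyEq_of_mem (hs.mem_nhds hp) h)]

lemma iter_pd_congr (hs : IsOpen s) (h : Set.EqOn f g s) (n : ℕ) (v : EE ρ) :
    Set.EqOn ((pd v)^[n] f) ((pd v)^[n] g) s := by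
  induction n generalizing f g with
  | zero => simpa using h
  | succ n ih =>
    rw [Function.iterate_succ_apply, Function.iterate_succ_apply]
    exact ih (fun q hq => pd_congr_on hs h hq v)

lemma iter_deriv_eventuallyEq {g₁ g₂ : ℝ → ℝ} {x : ℝ} (h : g₁ =ᶠ[nhds x] g₂) (n : ℕ) :
    deriv^[n] g₁ =ᶠ[nhds x] deriv^[n] g₂ := by
  induction n with
  | zero => simpa using h
  | succ n ih =>
    rw [Function.iterate_succ_apply', Function.iterate_succ_apply']
    exact ih.deriv

lemma iter_sliceX (hs : IsOpen s) (hf : ContDiffOn ℝ ∞ f s) (n : ℕ) :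
    ∀ p ∈ s, deriv^[n] (fun x => f (p.1, x, p.2.2)) p.2.1 = (pd eX)^[n] f p := by
  induction n generalizing f with
  | zero => intro p hp; rfl
  | succ n ih =>
    intro p hp
    rw [Function.iterate_succ_apply]
    have hU : IsOpen {x : ℝ | ((p.1, x, p.2.2) : EE ρ) ∈ s} :=
      hs.preimage (by fun_prop)
    have hev : deriv (fun x => f (p.1, x, p.2.2)) =ᶠ[nhds p.2.1]
        (fun x => pd eX f (p.1, x, p.2.2)) := by
      filter_upwards [hU.mem_nhds (show p.2.1 ∈ _ from hp)] with x hx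
      exact (hasDerivAt_sliceX (diffAt hs hf hx)).deriv
    rw [(iter_deriv_eventuallyEq hev n).eq_of_nhds]
    rw [ih (pd_smooth hs hf eX) p hp, ← Function.iterate_succ_apply]

section main

variable {ρ r : ℕ}

def jF (F : EE ρ → ℝ) (a : ℕ) : EE ρ → ℝ := (pd eX)^[a] F

lemma jF_succ (F : EE ρ → ℝ) (a : ℕ) : jF F (a + 1) = pd eX (jF F a) :=
  Function.iterate_succ_apply' (pd eX) a F

def Jm (F : EE ρ → ℝ) (p : EE ρ) : EE ρ := (p.1, p.2.1, fun b : Fin ρ => jF F (b : ℕ) p)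

def tHf (r : ℕ) (H : ℝ × ℝ × (Fin (r + 1) → ℝ) → ℝ) (F : EE ρ → ℝ) (p : EE ρ) : ℝ :=
  H (p.1, p.2.1, fun i : Fin (r + 1) => jF F (i : ℕ) p)

def Ftf (F : EE ρ → ℝ) : EE ρ → ℝ := pd eT F

def Kf (r : ℕ) (H : ℝ × ℝ × (Fin (r + 1) → ℝ) → ℝ) (F : EE ρ → ℝ) : EE ρ → ℝ :=
  fun p => tHf r H F p - Ftf F p

variable {s : Set (EE ρ)} {F η g : EE ρ → ℝ} {H : ℝ × ℝ × (Fin (r + 1) → ℝ) → ℝ}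
  {p : EE ρ}

lemma jF_smooth (hs : IsOpen s) (hF : ContDiffOn ℝ ∞ F s) (a : ℕ) :
    ContDiffOn ℝ ∞ (jF F a) s := by
  induction a with
  | zero => exact hF
  | succ a ih => rw [jF_succ]; exact pd_smooth hs ih eX

lemma Jm_smooth (hs : IsOpen s) (hF : ContDiffOn ℝ ∞ F s) :
    ContDiffOn ℝ ∞ (Jm F) s :=
  ContDiffOn.prodMk contDiff_fst.contDiffOn
    (ContDiffOn.prodMk (contDiff_fst.comp contDiff_snd).contDiffOn
      (contDiffOn_pi.2 fun b => jF_smooth hs hF (b : ℕ)))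

lemma tHf_smooth (hs : IsOpen s) (hH : ContDiff ℝ ∞ H) (hF : ContDiffOn ℝ ∞ F s) :
    ContDiffOn ℝ ∞ (tHf r H F) s :=
  hH.comp_contDiffOn
    (ContDiffOn.prodMk contDiff_fst.contDiffOn
      (ContDiffOn.prodMk (contDiff_fst.comp contDiff_snd).contDiffOn
        (contDiffOn_pi.2 fun i => jF_smooth hs hF (i : ℕ))))

lemma Ftf_smooth (hs : IsOpen s) (hF : ContDiffOn ℝ ∞ F s) :
    ContDiffOn ℝ ∞ (Ftf F) s := pd_smooth hs hF eT

lemma Kf_smooth (hs : IsOpen s) (hH : ContDiff ℝ ∞ H) (hF : ContDiffOn ℝ ∞ F s) :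
    ContDiffOn ℝ ∞ (Kf r H F) s :=
  (tHf_smooth hs hH hF).sub (Ftf_smooth hs hF)

/-! Bridges between the statement's partial derivatives and `pd`. -/

lemma pX_eq_pd {q : EE ρ} (hg : DifferentiableAt ℝ g q) : pX ρ g q = pd eX g q :=
  (hasDerivAt_sliceX hg).deriv

lemma pT_eq_pd {q : EE ρ} (hg : DifferentiableAt ℝ g q) : pT ρ g q = pd eT g q :=
  (hasDerivAt_sliceT hg).deriv

lemma pV_eq_pd {q : EE ρ} (hg : DifferentiableAt ℝ g q) (a : Fin ρ) :
    pV ρ a g q = pd (eV a) g q :=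
  (hasDerivAt_sliceV hg a).deriv

lemma dxCoeff_smooth (hη : ContDiff ℝ ∞ η) (a : Fin ρ) :
    ContDiff ℝ ∞ (fun p : EE ρ => dxCoeff ρ η p a) := by
  unfold dxCoeff
  by_cases h : (a : ℕ) + 1 < ρ
  · simp only [h, dif_pos]
    exact (ContinuousLinearMap.proj (R := ℝ) (φ := fun _ : Fin ρ => ℝ)
      ⟨(a : ℕ) + 1, h⟩).contDiff.comp (contDiff_snd.comp contDiff_snd)
  · simp only [h, dif_neg, not_false_iff]
    exact hη

lemma DX_eq (hη : ContDiff ℝ ∞ η) (hg : ContDiff ℝ ∞ g) :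
    DX ρ η g = fun p => pd eX g p + ∑ a : Fin ρ, dxCoeff ρ η p a * pd (eV a) g p := by
  funext q
  unfold DX
  rw [pX_eq_pd (hg.differentiable (by simp) q)]
  congr 1
  exact Finset.sum_congr rfl fun a _ => by
    rw [pV_eq_pd (hg.differentiable (by simp) q) a]

lemma DX_smooth (hη : ContDiff ℝ ∞ η) (hg : ContDiff ℝ ∞ g) :
    ContDiff ℝ ∞ (DX ρ η g) := by
  rw [DX_eq hη hg]
  exact (pd_smooth_global hg eX).add
    (ContDiff.sum fun a _ => (dxCoeff_smooth hη a).mul (pd_smooth_global hg (eV a)))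

lemma DX_iter_smooth (hη : ContDiff ℝ ∞ η) (hg : ContDiff ℝ ∞ g) (n : ℕ) :
    ContDiff ℝ ∞ ((DX ρ η)^[n] g) := by
  induction n generalizing g with
  | zero => exact hg
  | succ n ih =>
    rw [Function.iterate_succ_apply]
    exact ih (DX_smooth hη hg)

lemma Hhat_smooth (hη : ContDiff ℝ ∞ η) (hH : ContDiff ℝ ∞ H) :
    ContDiff ℝ ∞ (Hhat ρ r H η) := by
  unfold Hhat
  refine hH.comp (ContDiff.prodMk contDiff_fst (ContDiff.prodMk
    (contDiff_fst.comp contDiff_snd) (contDiff_pi.2 fun i => ?_)))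
  by_cases h : (i : ℕ) < ρ
  · simp only [h, dif_pos]
    exact (ContinuousLinearMap.proj (R := ℝ) (φ := fun _ : Fin ρ => ℝ)
      ⟨(i : ℕ), h⟩).contDiff.comp (contDiff_snd.comp contDiff_snd)
  · simp only [h, dif_neg, not_false_iff]
    exact DX_iter_smooth hη hη _

/-! The jet map and composition along `x`. -/

lemma jet_hasDerivAt_x (hs : IsOpen s) (hF : ContDiffOn ℝ ∞ F s) (hp : p ∈ s) :
    HasDerivAt (fun x => Jm F (p.1, x, p.2.2))
      (((0 : ℝ), (1 : ℝ), fun b : Fin ρ => jF F ((b : ℕ) + 1) p)) p.2.1 := by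
  refine (hasDerivAt_const _ _).prodMk ((hasDerivAt_id _).prodMk (hasDerivAt_pi.2 fun b => ?_))
  rw [jF_succ]
  exact hasDerivAt_sliceX (diffAt hs (jF_smooth hs hF (b : ℕ)) hp)

lemma dxCoeff_at_jet (hQ' : ∀ q ∈ s, jF F ρ q = η (Jm F q)) (hp : p ∈ s) (a : Fin ρ) :
    dxCoeff ρ η (Jm F p) a = jF F ((a : ℕ) + 1) p := by
  unfold dxCoeff
  by_cases h : (a : ℕ) + 1 < ρ
  · simp only [h, dif_pos]
    rfl
  · simp only [h, dif_neg, not_false_iff]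
    have hρa : ρ = (a : ℕ) + 1 := by have := a.isLt; omega
    rw [← hρa]
    exact (hQ' p hp).symm

lemma comp_Jx (hη : ContDiff ℝ ∞ η) (hs : IsOpen s) (hF : ContDiffOn ℝ ∞ F s)
    (hQ' : ∀ q ∈ s, jF F ρ q = η (Jm F q)) (hg : ContDiff ℝ ∞ g) (hp : p ∈ s) :
    HasDerivAt (fun x => g (Jm F (p.1, x, p.2.2))) (DX ρ η g (Jm F p)) p.2.1 := by
  have h1 := (hg.differentiable (by simp) (Jm F p)).hasFDerivAt.comp_hasDerivAt p.2.1
      (jet_hasDerivAt_x hs hF hp)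
  convert h1 using 1
  case e'_4 => rfl
  case e'_5 => rfl
  case e'_8 => rfl
  rw [fderiv_dir_decompX]
  unfold DX
  rw [pX_eq_pd (hg.differentiable (by simp) (Jm F p))]
  congr 1
  refine Finset.sum_congr rfl fun a _ => ?_
  rw [pV_eq_pd (hg.differentiable (by simp) (Jm F p)) a, dxCoeff_at_jet hQ' hp a]

lemma pdX_comp_Jm (hη : ContDiff ℝ ∞ η) (hs : IsOpen s) (hF : ContDiffOn ℝ ∞ F s)
    (hQ' : ∀ q ∈ s, jF F ρ q = η (Jm F q)) (hg : ContDiff ℝ ∞ g) (hp : p ∈ s) :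
    pd eX (fun q => g (Jm F q)) p = DX ρ η g (Jm F p) := by
  have hd : DifferentiableAt ℝ (fun q => g (Jm F q)) p :=
    diffAt hs (hg.comp_contDiffOn (Jm_smooth hs hF)) hp
  exact (hasDerivAt_sliceX hd).unique (comp_Jx hη hs hF hQ' hg hp)

lemma iter_DX (hη : ContDiff ℝ ∞ η) (hs : IsOpen s) (hF : ContDiffOn ℝ ∞ F s)
    (hQ' : ∀ q ∈ s, jF F ρ q = η (Jm F q)) (hg : ContDiff ℝ ∞ g) (n : ℕ) :
    ∀ p ∈ s, (DX ρ η)^[n] g (Jm F p) = (pd eX)^[n] (fun q => g (Jm F q)) p := by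
  induction n generalizing g with
  | zero => intro p hp; rfl
  | succ n ih =>
    intro p hp
    rw [Function.iterate_succ_apply, Function.iterate_succ_apply]
    rw [ih (DX_smooth hη hg) p hp]
    exact (iter_pd_congr hs
      (fun q hq => (pdX_comp_Jm hη hs hF hQ' hg hq).symm) n eX hp)

lemma DXk_eta (hη : ContDiff ℝ ∞ η) (hs : IsOpen s) (hF : ContDiffOn ℝ ∞ F s)
    (hQ' : ∀ q ∈ s, jF F ρ q = η (Jm F q)) (k : ℕ) (hp : p ∈ s) :
    (DX ρ η)^[k] η (Jm F p) = jF F (ρ + k) p := by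
  rw [iter_DX hη hs hF hQ' hη k p hp]
  rw [iter_pd_congr hs (fun q hq => (hQ' q hq).symm) k eX hp]
  show (pd eX)^[k] ((pd eX)^[ρ] F) p = (pd eX)^[ρ + k] F p
  rw [Nat.add_comm ρ k, Function.iterate_add_apply]

lemma Hhat_at_jet (hη : ContDiff ℝ ∞ η) (hs : IsOpen s) (hF : ContDiffOn ℝ ∞ F s)
    (hQ' : ∀ q ∈ s, jF F ρ q = η (Jm F q)) (hp : p ∈ s) :
    Hhat ρ r H η (Jm F p) = tHf r H F p := by
  unfold Hhat tHf
  congr 1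
  refine congrArg (Prod.mk _) (congrArg (Prod.mk _) (funext fun i => ?_))
  by_cases h : (i : ℕ) < ρ
  · simp only [h, dif_pos]
    rfl
  · simp only [h, dif_neg, not_false_iff]
    rw [DXk_eta hη hs hF hQ' ((i : ℕ) - ρ) hp, Nat.add_sub_cancel' (Nat.le_of_not_lt h)]

lemma DXk_Hhat (hη : ContDiff ℝ ∞ η) (hH : ContDiff ℝ ∞ H) (hs : IsOpen s)
    (hF : ContDiffOn ℝ ∞ F s) (hQ' : ∀ q ∈ s, jF F ρ q = η (Jm F q)) (k : ℕ) (hp : p ∈ s) :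
    (DX ρ η)^[k] (Hhat ρ r H η) (Jm F p) = (pd eX)^[k] (tHf r H F) p := by
  rw [iter_DX hη hs hF hQ' (Hhat_smooth hη hH) k p hp]
  exact iter_pd_congr hs (fun q hq => Hhat_at_jet hη hs hF hQ' hq) k eX hp

end main
section main2

variable {ρ r : ℕ} {s : Set (EE ρ)} {F η g : EE ρ → ℝ}
  {H : ℝ × ℝ × (Fin (r + 1) → ℝ) → ℝ} {p : EE ρ}

lemma jet_hasDerivAt_t (hs : IsOpen s) (hF : ContDiffOn ℝ ∞ F s) (hp : p ∈ s) :
    HasDerivAt (fun τ => Jm F (τ, p.2.1, p.2.2))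
      (((1 : ℝ), (0 : ℝ), fun b : Fin ρ => pd eT (jF F (b : ℕ)) p)) p.1 :=
  (hasDerivAt_id _).prodMk ((hasDerivAt_const _ _).prodMk (hasDerivAt_pi.2 fun b =>
    hasDerivAt_sliceT (diffAt hs (jF_smooth hs hF (b : ℕ)) hp)))

lemma comp_Jt (hs : IsOpen s) (hF : ContDiffOn ℝ ∞ F s) (hg : ContDiff ℝ ∞ g) (hp : p ∈ s) :
    HasDerivAt (fun τ => g (Jm F (τ, p.2.1, p.2.2)))
      (pd eT g (Jm F p) + ∑ b : Fin ρ, pd eT (jF F (b : ℕ)) p * pd (eV b) g (Jm F p)) p.1 := by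
  have h1 := (hg.differentiable (by simp) (Jm F p)).hasFDerivAt.comp_hasDerivAt p.1
      (jet_hasDerivAt_t hs hF hp)
  convert h1 using 1
  case e'_4 => rfl
  case e'_5 => rfl
  case e'_8 => rfl
  rw [fderiv_dir_decompT]

lemma star_id (hη : ContDiff ℝ ∞ η) (hs : IsOpen s) (hF : ContDiffOn ℝ ∞ F s)
    (hQ' : ∀ q ∈ s, jF F ρ q = η (Jm F q)) (hp : p ∈ s) :
    pd eT (jF F ρ) p
      = pd eT η (Jm F p) + ∑ b : Fin ρ, pd eT (jF F (b : ℕ)) p * pd (eV b) η (Jm F p) := by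
  have h1 := comp_Jt (g := η) hs hF hη hp
  have hU : IsOpen {τ : ℝ | ((τ, p.2.1, p.2.2) : EE ρ) ∈ s} := hs.preimage (by fun_prop)
  have h2 : HasDerivAt (fun τ => η (Jm F (τ, p.2.1, p.2.2))) (pd eT (jF F ρ) p) p.1 := by
    refine (hasDerivAt_sliceT (diffAt hs (jF_smooth hs hF ρ) hp)).congr_of_eventuallyEq ?_
    filter_upwards [hU.mem_nhds (show p.1 ∈ _ from hp)] with τ hτ
    exact (hQ' _ hτ).symm
  exact h2.unique h1

lemma pdT_jF (hs : IsOpen s) (hF : ContDiffOn ℝ ∞ F s) (a : ℕ) :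
    ∀ p ∈ s, pd eT (jF F a) p = (pd eX)^[a] (Ftf F) p := by
  induction a with
  | zero => intro p hp; rfl
  | succ a ih =>
    intro p hp
    rw [jF_succ, pd_comm hs (jF_smooth hs hF a) hp eT eX,
      pd_congr_on hs (fun q hq => ih q hq) hp eX, Function.iterate_succ_apply']

lemma pd_sub {f g : EE ρ → ℝ} (hf : DifferentiableAt ℝ f p) (hg : DifferentiableAt ℝ g p)
    (v : EE ρ) : pd v (fun q => f q - g q) p = pd v f p - pd v g p := by
  unfold pd
  rw [fderiv_fun_sub hf hg]
  rfl

lemma iter_pd_sub (hs : IsOpen s) {f g : EE ρ → ℝ} (hf : ContDiffOn ℝ ∞ f s)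
    (hg : ContDiffOn ℝ ∞ g s) (n : ℕ) :
    ∀ p ∈ s, (pd eX)^[n] (fun q => f q - g q) p = (pd eX)^[n] f p - (pd eX)^[n] g p := by
  induction n generalizing f g with
  | zero => intro p hp; rfl
  | succ n ih =>
    intro p hp
    rw [Function.iterate_succ_apply, Function.iterate_succ_apply,
      Function.iterate_succ_apply]
    rw [iter_pd_congr hs
      (fun q hq => pd_sub (diffAt hs hf hq) (diffAt hs hg hq) eX) n eX hp]
    exact ih (pd_smooth hs hf eX) (pd_smooth hs hg eX) p hp

def Lf (η : EE ρ → ℝ) (r : ℕ) (H : ℝ × ℝ × (Fin (r + 1) → ℝ) → ℝ) (F : EE ρ → ℝ)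
    (p : EE ρ) : ℝ :=
  (pd eX)^[ρ] (Kf r H F) p
    - ∑ b : Fin ρ, pd (eV b) η (Jm F p) * (pd eX)^[(b : ℕ)] (Kf r H F) p

lemma Lf_eq (hη : ContDiff ℝ ∞ η) (hH : ContDiff ℝ ∞ H) (hs : IsOpen s)
    (hF : ContDiffOn ℝ ∞ F s) (hQ' : ∀ q ∈ s, jF F ρ q = η (Jm F q)) (hp : p ∈ s) :
    Lf η r H F p = (DX ρ η)^[ρ] (Hhat ρ r H η) (Jm F p) - DT ρ r H η η (Jm F p) := by
  have hKb : ∀ b : ℕ, (pd eX)^[b] (Kf r H F) p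
      = (pd eX)^[b] (tHf r H F) p - (pd eX)^[b] (Ftf F) p :=
    fun b => iter_pd_sub hs (tHf_smooth hs hH hF) (Ftf_smooth hs hF) b p hp
  have hT : ∀ b : ℕ, pd eT (jF F b) p = (pd eX)^[b] (Ftf F) p :=
    fun b => pdT_jF hs hF b p hp
  have hstar := star_id hη hs hF hQ' hp
  rw [hT ρ] at hstar
  have hstar2 : (pd eX)^[ρ] (Ftf F) p = pd eT η (Jm F p)
      + ∑ b : Fin ρ, (pd eX)^[(b : ℕ)] (Ftf F) p * pd (eV b) η (Jm F p) := by
    rw [hstar]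
    congr 1
    exact Finset.sum_congr rfl fun b _ => by rw [hT (b : ℕ)]
  have hDT : DT ρ r H η η (Jm F p)
      = pd eT η (Jm F p)
        + ∑ b : Fin ρ, (pd eX)^[(b : ℕ)] (tHf r H F) p * pd (eV b) η (Jm F p) := by
    unfold DT
    rw [pT_eq_pd (hη.differentiable (by simp) _)]
    congr 1
    refine Finset.sum_congr rfl fun b _ => ?_
    rw [DXk_Hhat hη hH hs hF hQ' (b : ℕ) hp, pV_eq_pd (hη.differentiable (by simp) _) b]
  have hRHS := DXk_Hhat hη hH hs hF hQ' ρ hp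
  unfold Lf
  rw [hRHS, hDT, hKb ρ, hstar2]
  simp only [hKb]
  have hc : ∀ b : Fin ρ, pd (eV b) η (Jm F p)
        * ((pd eX)^[(b : ℕ)] (tHf r H F) p - (pd eX)^[(b : ℕ)] (Ftf F) p)
      = (pd eX)^[(b : ℕ)] (tHf r H F) p * pd (eV b) η (Jm F p)
        - (pd eX)^[(b : ℕ)] (Ftf F) p * pd (eV b) η (Jm F p) := fun b => by ring
  rw [Finset.sum_congr rfl fun b _ => hc b, Finset.sum_sub_distrib]
  ring

end main2

section main3

variable {ρ r : ℕ} {s : Set (EE ρ)} {F η : EE ρ → ℝ}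
  {H : ℝ × ℝ × (Fin (r + 1) → ℝ) → ℝ} {p : EE ρ}

def phiM (F : EE ρ → ℝ) (p : EE ρ) : Matrix (Fin ρ) (Fin ρ) ℝ :=
  Matrix.of fun a b => pd (eV b) (jF F (a : ℕ)) p

def Gf (r : ℕ) (H : ℝ × ℝ × (Fin (r + 1) → ℝ) → ℝ) (F : EE ρ → ℝ) (c : Fin ρ)
    (p : EE ρ) : ℝ :=
  ∑ b : Fin ρ, (phiM F p)⁻¹ c b * (pd eX)^[(b : ℕ)] (Kf r H F) p

lemma iter_pd_smooth {f : EE ρ → ℝ} (hs : IsOpen s) (hf : ContDiffOn ℝ ∞ f s) (n : ℕ)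
    (v : EE ρ) : ContDiffOn ℝ ∞ ((pd v)^[n] f) s := by
  induction n generalizing f with
  | zero => exact hf
  | succ n ih => rw [Function.iterate_succ_apply]; exact ih (pd_smooth hs hf v)

lemma famJac_eq_phiM (hs : IsOpen s) (hF : ContDiffOn ℝ ∞ F s) (hp : p ∈ s) :
    famJac ρ F p = phiM F p := by
  ext a b
  show deriv (fun y => deriv^[(a : ℕ)]
      (fun x => F (p.1, x, Function.update p.2.2 b y)) p.2.1) (p.2.2 b)
    = pd (eV b) (jF F (a : ℕ)) p
  have hUb : IsOpen {y : ℝ | ((p.1, p.2.1, Function.update p.2.2 b y) : EE ρ) ∈ s} := by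
    apply hs.preimage
    exact continuous_const.prodMk (continuous_const.prodMk
      (continuous_const.update b continuous_id))
  have hmem : p.2.2 b ∈ {y : ℝ | ((p.1, p.2.1, Function.update p.2.2 b y) : EE ρ) ∈ s} := by
    simp only [Set.mem_setOf_eq, Function.update_eq_self]
    exact hp
  have hev : (fun y => deriv^[(a : ℕ)]
        (fun x => F (p.1, x, Function.update p.2.2 b y)) p.2.1)
      =ᶠ[nhds (p.2.2 b)] (fun y => jF F (a : ℕ) (p.1, p.2.1, Function.update p.2.2 b y)) := by
    filter_upwards [hUb.mem_nhds hmem] with y hy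
    exact iter_sliceX hs hF (a : ℕ) (p.1, p.2.1, Function.update p.2.2 b y) hy
  rw [hev.deriv_eq]
  exact (hasDerivAt_sliceV (diffAt hs (jF_smooth hs hF (a : ℕ)) hp) b).deriv

lemma tildeH_eq (hs : IsOpen s) (hF : ContDiffOn ℝ ∞ F s) (hp : p ∈ s) :
    tildeH ρ r H F p = tHf r H F p := by
  unfold tildeH tHf
  refine congrArg _ (congrArg (Prod.mk _) (congrArg (Prod.mk _) (funext fun i => ?_)))
  exact iter_sliceX hs hF (i : ℕ) p hp

lemma redRHS_eq (hs : IsOpen s) (hH : ContDiff ℝ ∞ H) (hF : ContDiffOn ℝ ∞ F s)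
    (hp : p ∈ s) (a : Fin ρ) :
    redRHS ρ r H F a p = Gf r H F a p := by
  unfold redRHS Gf
  rw [famJac_eq_phiM hs hF hp]
  refine Finset.sum_congr rfl fun b _ => ?_
  congr 1
  have hU : IsOpen {x : ℝ | ((p.1, x, p.2.2) : EE ρ) ∈ s} := hs.preimage (by fun_prop)
  have hev : (fun x => tildeH ρ r H F (p.1, x, p.2.2)
        - deriv (fun s' => F (s', x, p.2.2)) p.1)
      =ᶠ[nhds p.2.1] (fun x => Kf r H F (p.1, x, p.2.2)) := by
    filter_upwards [hU.mem_nhds (show p.2.1 ∈ _ from hp)] with x hx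
    have h1 : tildeH ρ r H F (p.1, x, p.2.2) = tHf r H F (p.1, x, p.2.2) :=
      tildeH_eq hs hF hx
    have h2 : deriv (fun s' => F (s', x, p.2.2)) p.1 = Ftf F (p.1, x, p.2.2) :=
      (hasDerivAt_sliceT (p := ((p.1, x, p.2.2) : EE ρ)) (diffAt hs hF hx)).deriv
    rw [h1, h2]
    rfl
  rw [(iter_deriv_eventuallyEq hev (b : ℕ)).eq_of_nhds]
  exact iter_sliceX hs (Kf_smooth hs hH hF) (b : ℕ) p hp

lemma phi_mul_G (hdet : IsUnit (phiM F p).det) (a : Fin ρ) :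
    ∑ c : Fin ρ, phiM F p a c * Gf r H F c p = (pd eX)^[(a : ℕ)] (Kf r H F) p := by
  have hG : (fun c => Gf r H F c p)
      = (phiM F p)⁻¹ *ᵥ (fun b => (pd eX)^[(b : ℕ)] (Kf r H F) p) := by
    funext c
    simp [Gf, Matrix.mulVec, dotProduct]
  have h1 : ∑ c : Fin ρ, phiM F p a c * Gf r H F c p
      = (phiM F p *ᵥ (fun c => Gf r H F c p)) a := by
    simp [Matrix.mulVec, dotProduct]
  rw [h1, hG, Matrix.mulVec_mulVec, Matrix.mul_nonsing_inv _ hdet, Matrix.one_mulVec]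

lemma pd_mul {f g : EE ρ → ℝ} (hf : DifferentiableAt ℝ f p) (hg : DifferentiableAt ℝ g p)
    (v : EE ρ) :
    pd v (fun q => f q * g q) p = pd v f p * g p + f p * pd v g p := by
  unfold pd
  rw [fderiv_fun_mul hf hg]
  simp [smul_eq_mul]
  ring

lemma pd_finset_sum {ι : Type*} {t : Finset ι} {f : ι → EE ρ → ℝ}
    (hf : ∀ i ∈ t, DifferentiableAt ℝ (f i) p) (v : EE ρ) :
    pd v (fun q => ∑ i ∈ t, f i q) p = ∑ i ∈ t, pd v (f i) p := by
  unfold pd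
  rw [fderiv_fun_sum hf]
  simp

lemma contDiffOn_finset_prod {ι : Type*} (t : Finset ι) (f : ι → EE ρ → ℝ)
    (h : ∀ i ∈ t, ContDiffOn ℝ ∞ (f i) s) :
    ContDiffOn ℝ ∞ (fun p => ∏ i ∈ t, f i p) s := by
  classical
  induction t using Finset.induction with
  | empty => simpa using contDiffOn_const
  | insert a t' hx ih =>
    simp only [Finset.prod_insert hx]
    exact (h a (Finset.mem_insert_self a t')).mul
      (ih fun i hi => h i (Finset.mem_insert_of_mem hi))

lemma contDiffOn_det {M : EE ρ → Matrix (Fin ρ) (Fin ρ) ℝ}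
    (h : ∀ a b, ContDiffOn ℝ ∞ (fun p => M p a b) s) :
    ContDiffOn ℝ ∞ (fun p => (M p).det) s := by
  simp only [Matrix.det_apply']
  apply ContDiffOn.sum
  intro σ _
  exact contDiffOn_const.mul
    (contDiffOn_finset_prod Finset.univ (fun i p => M p (σ i) i) fun i _ => h (σ i) i)

lemma phiM_entry_smooth (hs : IsOpen s) (hF : ContDiffOn ℝ ∞ F s) (a b : Fin ρ) :
    ContDiffOn ℝ ∞ (fun p => phiM F p a b) s :=
  pd_smooth hs (jF_smooth hs hF (a : ℕ)) (eV b)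

lemma Gf_smooth (hs : IsOpen s) (hH : ContDiff ℝ ∞ H) (hF : ContDiffOn ℝ ∞ F s)
    (hdet : ∀ q ∈ s, (phiM F q).det ≠ 0) (c : Fin ρ) :
    ContDiffOn ℝ ∞ (Gf r H F c) s := by
  unfold Gf
  apply ContDiffOn.sum
  intro b _
  refine ContDiffOn.mul ?_ (iter_pd_smooth hs (Kf_smooth hs hH hF) (b : ℕ) eX)
  have hrw : (fun p => (phiM F p)⁻¹ c b)
      = fun p => ((phiM F p).det)⁻¹ * (phiM F p).adjugate c b := by
    funext q
    rw [Matrix.inv_def, Matrix.smul_apply, Ring.inverse_eq_inv, smul_eq_mul]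
  rw [hrw]
  have hdets : ContDiffOn ℝ ∞ (fun p => (phiM F p).det) s :=
    contDiffOn_det (phiM_entry_smooth hs hF)
  refine ContDiffOn.mul (hdets.inv hdet) ?_
  simp only [Matrix.adjugate_apply]
  apply contDiffOn_det
  intro a b'
  by_cases hab : a = b
  · simp only [Matrix.updateRow_apply, hab, if_pos rfl, if_true]
    exact contDiffOn_const
  · simp only [Matrix.updateRow_apply, hab, if_false]
    exact phiM_entry_smooth hs hF a b'

end main3

section main4

variable {ρ r : ℕ} {s : Set (EE ρ)} {F η : EE ρ → ℝ}
  {H : ℝ × ℝ × (Fin (r + 1) → ℝ) → ℝ} {p : EE ρ}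

lemma pdV_eta_Jm (hη : ContDiff ℝ ∞ η) (hs : IsOpen s) (hF : ContDiffOn ℝ ∞ F s)
    (hp : p ∈ s) (c : Fin ρ) :
    pd (eV c) (fun q => η (Jm F q)) p
      = ∑ b : Fin ρ, pd (eV c) (jF F (b : ℕ)) p * pd (eV b) η (Jm F p) := by
  have hcurve : HasDerivAt (fun y => Jm F (p.1, p.2.1, Function.update p.2.2 c y))
      (((0 : ℝ), (0 : ℝ), fun b : Fin ρ => pd (eV c) (jF F (b : ℕ)) p)) (p.2.2 c) :=
    (hasDerivAt_const _ _).prodMk ((hasDerivAt_const _ _).prodMk (hasDerivAt_pi.2 fun b =>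
      hasDerivAt_sliceV (diffAt hs (jF_smooth hs hF (b : ℕ)) hp) c))
  have h1 := (hη.differentiable (by simp) (Jm F p)).hasFDerivAt.comp_hasDerivAt_of_eq
      (p.2.2 c) hcurve (by rw [Function.update_eq_self])
  have hdd : DifferentiableAt ℝ (fun q => η (Jm F q)) p :=
    diffAt hs (hη.comp_contDiffOn (Jm_smooth hs hF)) hp
  have h2 := hasDerivAt_sliceV hdd c
  rw [h2.unique h1, fderiv_dir_decompV]

lemma phi_row_pdXG (hη : ContDiff ℝ ∞ η) (hH : ContDiff ℝ ∞ H) (hs : IsOpen s)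
    (hF : ContDiffOn ℝ ∞ F s) (hQ' : ∀ q ∈ s, jF F ρ q = η (Jm F q))
    (hdet : ∀ q ∈ s, (phiM F q).det ≠ 0) (hp : p ∈ s) (a : Fin ρ) :
    ∑ c : Fin ρ, phiM F p a c * pd eX (Gf r H F c) p
      = if (a : ℕ) + 1 = ρ then Lf η r H F p else 0 := by
  have hGsm : ∀ c, ContDiffOn ℝ ∞ (Gf r H F c) s := Gf_smooth hs hH hF hdet
  have hphi_sm : ∀ c : Fin ρ, ContDiffOn ℝ ∞ (fun q => phiM F q a c) s := fun c =>
    phiM_entry_smooth hs hF a c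
  have h0 : Set.EqOn (fun q => ∑ c : Fin ρ, phiM F q a c * Gf r H F c q)
      ((pd eX)^[(a : ℕ)] (Kf r H F)) s := fun q hq =>
    phi_mul_G (Ne.isUnit (hdet q hq)) a
  have hEQ1 : ∑ c : Fin ρ, pd eX (fun q => phiM F q a c) p * Gf r H F c p
        + ∑ c : Fin ρ, phiM F p a c * pd eX (Gf r H F c) p
      = (pd eX)^[(a : ℕ) + 1] (Kf r H F) p := by
    have hL : pd eX (fun q => ∑ c : Fin ρ, phiM F q a c * Gf r H F c q) p
        = ∑ c : Fin ρ, (pd eX (fun q => phiM F q a c) p * Gf r H F c p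
            + phiM F p a c * pd eX (Gf r H F c) p) := by
      rw [pd_finset_sum (f := fun c q => phiM F q a c * Gf r H F c q)
        (fun c _ => (diffAt hs (hphi_sm c) hp).mul (diffAt hs (hGsm c) hp)) eX]
      exact Finset.sum_congr rfl fun c _ =>
        pd_mul (diffAt hs (hphi_sm c) hp) (diffAt hs (hGsm c) hp) eX
    rw [← Finset.sum_add_distrib, ← hL, pd_congr_on hs h0 hp eX,
      Function.iterate_succ_apply']
  have hphiX : ∀ c : Fin ρ, pd eX (fun q => phiM F q a c) p
      = pd (eV c) (jF F ((a : ℕ) + 1)) p := fun c => by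
    show pd eX (pd (eV c) (jF F (a : ℕ))) p = _
    rw [pd_comm hs (jF_smooth hs hF (a : ℕ)) hp eX (eV c), ← jF_succ]
  by_cases hcase : (a : ℕ) + 1 < ρ
  · rw [if_neg (by omega)]
    have h2 : ∑ c : Fin ρ, pd eX (fun q => phiM F q a c) p * Gf r H F c p
        = (pd eX)^[(a : ℕ) + 1] (Kf r H F) p := by
      have hrow := phi_mul_G (p := p) (F := F) (r := r) (H := H)
        (Ne.isUnit (hdet p hp)) (⟨(a : ℕ) + 1, hcase⟩ : Fin ρ)
      simp only [Fin.val_mk] at hrow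
      rw [← hrow]
      exact Finset.sum_congr rfl fun c _ => by rw [hphiX c]; rfl
    linarith [hEQ1, h2]
  · have hρa : (a : ℕ) + 1 = ρ := by have := a.isLt; omega
    rw [if_pos hρa]
    have h3 : ∀ c : Fin ρ, pd eX (fun q => phiM F q a c) p
        = ∑ b : Fin ρ, phiM F p b c * pd (eV b) η (Jm F p) := fun c => by
      rw [hphiX c, hρa, pd_congr_on hs (fun q hq => hQ' q hq) hp (eV c),
        pdV_eta_Jm hη hs hF hp c]
      rfl
    have h4 : ∑ c : Fin ρ, pd eX (fun q => phiM F q a c) p * Gf r H F c p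
        = ∑ b : Fin ρ, pd (eV b) η (Jm F p) * (pd eX)^[(b : ℕ)] (Kf r H F) p := by
      simp only [h3]
      calc ∑ c : Fin ρ, (∑ b : Fin ρ, phiM F p b c * pd (eV b) η (Jm F p)) * Gf r H F c p
          = ∑ c : Fin ρ, ∑ b : Fin ρ,
              pd (eV b) η (Jm F p) * (phiM F p b c * Gf r H F c p) := by
            refine Finset.sum_congr rfl fun c _ => ?_
            rw [Finset.sum_mul]
            exact Finset.sum_congr rfl fun b _ => by ring
        _ = ∑ b : Fin ρ, pd (eV b) η (Jm F p)
              * ∑ c : Fin ρ, phiM F p b c * Gf r H F c p := by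
            rw [Finset.sum_comm]
            exact Finset.sum_congr rfl fun b _ => by rw [Finset.mul_sum]
        _ = ∑ b : Fin ρ, pd (eV b) η (Jm F p) * (pd eX)^[(b : ℕ)] (Kf r H F) p := by
            refine Finset.sum_congr rfl fun b _ => ?_
            rw [phi_mul_G (Ne.isUnit (hdet p hp)) b]
    have h5 := hEQ1
    rw [h4, hρa] at h5
    unfold Lf
    linarith
  
lemma pdXG_zero_of_Lf (hη : ContDiff ℝ ∞ η) (hH : ContDiff ℝ ∞ H) (hs : IsOpen s)
    (hF : ContDiffOn ℝ ∞ F s) (hQ' : ∀ q ∈ s, jF F ρ q = η (Jm F q))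
    (hdet : ∀ q ∈ s, (phiM F q).det ≠ 0) (hp : p ∈ s)
    (hLf : Lf η r H F p = 0) (c : Fin ρ) : pd eX (Gf r H F c) p = 0 := by
  have hx : phiM F p *ᵥ (fun c => pd eX (Gf r H F c) p) = 0 := by
    funext a
    simp only [Matrix.mulVec, dotProduct, Pi.zero_apply]
    rw [phi_row_pdXG hη hH hs hF hQ' hdet hp a]
    split <;> simp [hLf]
  have h2 := congrArg (fun v => (phiM F p)⁻¹ *ᵥ v) hx
  simp only [Matrix.mulVec_mulVec, Matrix.mulVec_zero] at h2
  rw [Matrix.nonsing_inv_mul _ (Ne.isUnit (hdet p hp)), Matrix.one_mulVec] at h2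
  exact congrFun h2 c

lemma Lf_zero_of_pdXG (hρ : 1 ≤ ρ) (hη : ContDiff ℝ ∞ η) (hH : ContDiff ℝ ∞ H)
    (hs : IsOpen s) (hF : ContDiffOn ℝ ∞ F s) (hQ' : ∀ q ∈ s, jF F ρ q = η (Jm F q))
    (hdet : ∀ q ∈ s, (phiM F q).det ≠ 0) (hp : p ∈ s)
    (hz : ∀ c : Fin ρ, pd eX (Gf r H F c) p = 0) : Lf η r H F p = 0 := by
  have hlast := phi_row_pdXG hη hH hs hF hQ' hdet hp (⟨ρ - 1, by omega⟩ : Fin ρ)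
  simp only [hz, mul_zero, Finset.sum_const_zero, Fin.val_mk] at hlast
  rw [if_pos (by omega)] at hlast
  exact hlast.symm

end main4

end S9

/-- for an ansatz `F` constructed with the operator `Q` (i.e. `det Φ ≠ 0` and
`∂ₓ^ρ F = η̌(t, x, F, …, ∂ₓ^{ρ-1}F)`), the determining equation `D̂ₜη̌ = D̂ₓ^ρĤ` holds at all
jet points of `F` iff each `Gᵃ` is independent of `x`, i.e. iff the ansatz reduces `E` to a
normal system of `ρ` first-order ODEs `dφᵃ/dt = Gᵃ(t, φ)`. -/
theorem determining_at_jets_iff_ansatz_reduces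
    (ρ r : ℕ) (hρ : 1 ≤ ρ) (hr : 1 ≤ r)
    (H : ℝ × ℝ × (Fin (r + 1) → ℝ) → ℝ) (hH : ContDiff ℝ (⊤ : ℕ∞) H)
    (η : ℝ × ℝ × (Fin ρ → ℝ) → ℝ) (hη : ContDiff ℝ (⊤ : ℕ∞) η)
    (I J : Set ℝ) (W : Set (Fin ρ → ℝ))
    (hI : IsOpen I) (hIc : I.OrdConnected) (hJ : IsOpen J) (hJc : J.OrdConnected)
    (hW : IsOpen W)
    (F : ℝ × ℝ × (Fin ρ → ℝ) → ℝ) (hF : ContDiffOn ℝ (⊤ : ℕ∞) F (I ×ˢ J ×ˢ W))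
    (hjac : ∀ p ∈ I ×ˢ J ×ˢ W, (famJac ρ F p).det ≠ 0)
    (hQ : ∀ p ∈ I ×ˢ J ×ˢ W,
      deriv^[ρ] (fun x => F (p.1, x, p.2.2)) p.2.1 = η (jetMap ρ F p)) :
    (∀ p ∈ I ×ˢ J ×ˢ W,
        DT ρ r H η η (jetMap ρ F p) = (DX ρ η)^[ρ] (Hhat ρ r H η) (jetMap ρ F p)) ↔
      (∀ a : Fin ρ, ∀ t x₁ x₂ : ℝ, ∀ w : Fin ρ → ℝ,
        (t, x₁, w) ∈ I ×ˢ J ×ˢ W → (t, x₂, w) ∈ I ×ˢ J ×ˢ W →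
          redRHS ρ r H F a (t, x₁, w) = redRHS ρ r H F a (t, x₂, w)) := by
  classical
  have hs : IsOpen (I ×ˢ J ×ˢ W) := hI.prod (hJ.prod hW)
  have hη' : ContDiff ℝ (∞ : WithTop ℕ∞) η := hη.of_le (by simp)
  have hH' : ContDiff ℝ (∞ : WithTop ℕ∞) H := hH.of_le (by simp)
  have hF' : ContDiffOn ℝ (∞ : WithTop ℕ∞) F (I ×ˢ J ×ˢ W) := hF.of_le (by simp)
  have hjet : ∀ p ∈ I ×ˢ J ×ˢ W, jetMap ρ F p = S9.Jm F p := fun p hp => by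
    unfold jetMap S9.Jm
    exact congrArg (Prod.mk _) (congrArg (Prod.mk _) (funext fun b =>
      S9.iter_sliceX hs hF' (b : ℕ) p hp))
  have hQ' : ∀ p ∈ I ×ˢ J ×ˢ W, S9.jF F ρ p = η (S9.Jm F p) := fun p hp => by
    show (S9.pd S9.eX)^[ρ] F p = _
    rw [← S9.iter_sliceX hs hF' ρ p hp, hQ p hp, hjet p hp]
  have hdet : ∀ q ∈ I ×ˢ J ×ˢ W, (S9.phiM F q).det ≠ 0 := fun q hq => by
    rw [← S9.famJac_eq_phiM hs hF' hq]; exact hjac q hq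
  constructor
  · intro hDet a t x₁ x₂ w h1 h2
    have hLf0 : ∀ p ∈ I ×ˢ J ×ˢ W, S9.Lf η r H F p = 0 := fun p hp => by
      rw [S9.Lf_eq hη' hH' hs hF' hQ' hp, ← hjet p hp, hDet p hp, sub_self]
    have hzero : ∀ p ∈ I ×ˢ J ×ˢ W, ∀ c : Fin ρ, S9.pd S9.eX (S9.Gf r H F c) p = 0 :=
      fun p hp c => S9.pdXG_zero_of_Lf hη' hH' hs hF' hQ' hdet hp (hLf0 p hp) c
    have hmem : ∀ x ∈ J, ((t, x, w) : ℝ × ℝ × (Fin ρ → ℝ)) ∈ I ×ˢ J ×ˢ W := fun x hx =>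
      ⟨h1.1, hx, h1.2.2⟩
    have hder : ∀ x ∈ J, HasDerivAt (fun x' => S9.Gf r H F a (t, x', w)) 0 x := by
      intro x hx
      have h3 := S9.hasDerivAt_sliceX
        (S9.diffAt hs (S9.Gf_smooth hs hH' hF' hdet a) (hmem x hx))
      rw [hzero _ (hmem x hx) a] at h3
      exact h3
    have hconv : Convex ℝ J := convex_iff_ordConnected.mpr hJc
    have hg1 : S9.Gf r H F a (t, x₁, w) = S9.Gf r H F a (t, x₂, w) := by
      have hdiffOn : DifferentiableOn ℝ (fun x' => S9.Gf r H F a (t, x', w)) J :=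
        fun x hx => ((hder x hx).differentiableAt).differentiableWithinAt
      have hf0 : ∀ x ∈ J, fderivWithin ℝ (fun x' => S9.Gf r H F a (t, x', w)) J x = 0 := by
        intro x hx
        rw [fderivWithin_of_mem_nhds (hJ.mem_nhds hx), (hder x hx).hasFDerivAt.fderiv]
        ext
        simp
      exact hconv.is_const_of_fderivWithin_eq_zero hdiffOn hf0 h1.2.1 h2.2.1
    rw [S9.redRHS_eq hs hH' hF' h1 a, S9.redRHS_eq hs hH' hF' h2 a]
    exact hg1
  · intro hred p hp
    have hGzero : ∀ c : Fin ρ, S9.pd S9.eX (S9.Gf r H F c) p = 0 := by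
      intro c
      have h3 := S9.hasDerivAt_sliceX (S9.diffAt hs (S9.Gf_smooth hs hH' hF' hdet c) hp)
      have hev : (fun x => S9.Gf r H F c (p.1, x, p.2.2)) =ᶠ[nhds p.2.1]
          (fun _ => S9.Gf r H F c p) := by
        filter_upwards [hJ.mem_nhds hp.2.1] with x hx
        have hm : ((p.1, x, p.2.2) : ℝ × ℝ × (Fin ρ → ℝ)) ∈ I ×ˢ J ×ˢ W :=
          ⟨hp.1, hx, hp.2.2⟩
        rw [← S9.redRHS_eq hs hH' hF' hm c, ← S9.redRHS_eq hs hH' hF' hp c]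
        exact hred c p.1 x p.2.1 p.2.2 hm hp
      have h6 : S9.pd S9.eX (S9.Gf r H F c) p
          = deriv (fun _ : ℝ => S9.Gf r H F c p) p.2.1 := by
        rw [← h3.deriv]
        exact hev.deriv_eq
      rw [h6, deriv_const]
    have hLf := S9.Lf_zero_of_pdXG hρ hη' hH' hs hF' hQ' hdet hp hGzero
    have h4 := S9.Lf_eq hη' hH' hs hF' hQ' hp
    rw [hLf] at h4
    rw [hjet p hp]
    exact (sub_eq_zero.mp h4.symm).symm
end
end

section
/- Let I ⊆ ℝ be an open interval and φ⁴, φ⁵, φ⁶ : I → ℝ differentiable, and define v(t,x) = 2x³ + φ⁴(t)x⁴ + φ⁵(t)x⁵ + φ⁶(t)x⁶. Then v solves x²vₜ = v·vₓₓ − (5/6)(vₓ)² + x²vₓ for all (t,x) ∈ I × ℝ if and only if on I the functions satisfy the system dφ⁴/dt = 7φ⁵ − (4/3)(φ⁴)², dφ⁵/dt = 18φ⁶ − (4/3)φ⁴φ⁵, dφ⁶/dt = −(5/6)(φ⁵)² + 2φ⁴φ⁶. -/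
/-!
For fixed `t`, `v t` lies in the span of `x³, …, x⁶`, and a direct computation shows that
`v·vₓₓ − (5/6)(vₓ)² + x²vₓ` then lies in the span of `x⁶, x⁷, x⁸`: the terms of degree
`4, 5, 9, 10` cancel identically (degree `4` needs exactly the leading coefficient `2`).
As `x²vₜ` lies in the same span, the equation holds for all `x` iff the three coefficients
agree, which is the reduced system.
-/

def sl2Ansatz (a b c x : ℝ) : ℝ := 2 * x ^ 3 + a * x ^ 4 + b * x ^ 5 + c * x ^ 6

section Ansatz

variable (a b c : ℝ)

theorem hasDerivAt_sl2Ansatz (x : ℝ) :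
    HasDerivAt (sl2Ansatz a b c) (6 * x ^ 2 + 4 * a * x ^ 3 + 5 * b * x ^ 4 + 6 * c * x ^ 5) x := by
  have := ((((hasDerivAt_pow 3 x).const_mul 2).add ((hasDerivAt_pow 4 x).const_mul a)).add
    ((hasDerivAt_pow 5 x).const_mul b)).add ((hasDerivAt_pow 6 x).const_mul c)
  exact this.congr_deriv (by push_cast; ring)

theorem deriv_sl2Ansatz :
    deriv (sl2Ansatz a b c)
      = fun x => 6 * x ^ 2 + 4 * a * x ^ 3 + 5 * b * x ^ 4 + 6 * c * x ^ 5 :=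
  funext fun x => (hasDerivAt_sl2Ansatz a b c x).deriv

theorem iterate_two_deriv_sl2Ansatz (x : ℝ) :
    deriv^[2] (sl2Ansatz a b c) x
      = 12 * x + 12 * a * x ^ 2 + 20 * b * x ^ 3 + 30 * c * x ^ 4 := by
  have := ((((hasDerivAt_pow 2 x).const_mul 6).add ((hasDerivAt_pow 3 x).const_mul (4 * a))).add
    ((hasDerivAt_pow 4 x).const_mul (5 * b))).add ((hasDerivAt_pow 5 x).const_mul (6 * c))
  rw [Function.iterate_succ_apply, Function.iterate_one, deriv_sl2Ansatz]
  exact (this.congr_deriv (by push_cast; ring)).deriv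

theorem sl2Ansatz_rhs (x : ℝ) :
    sl2Ansatz a b c x * deriv^[2] (sl2Ansatz a b c) x
        - (5 / 6) * deriv (sl2Ansatz a b c) x ^ 2 + x ^ 2 * deriv (sl2Ansatz a b c) x
      = (7 * b - (4 / 3) * a ^ 2) * x ^ 6 + (18 * c - (4 / 3) * a * b) * x ^ 7
        + (-(5 / 6) * b ^ 2 + 2 * a * c) * x ^ 8 := by
  rw [iterate_two_deriv_sl2Ansatz, deriv_sl2Ansatz, sl2Ansatz]
  ring

end Ansatz

theorem HasDerivAt.sl2Ansatz {f g h : ℝ → ℝ} {f' g' h' t : ℝ} (hf : HasDerivAt f f' t)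
    (hg : HasDerivAt g g' t) (hh : HasDerivAt h h' t) (x : ℝ) :
    HasDerivAt (fun s => sl2Ansatz (f s) (g s) (h s) x) (f' * x ^ 4 + g' * x ^ 5 + h' * x ^ 6) t := by
  exact (((hf.mul_const (x ^ 4)).const_add (2 * x ^ 3)).add (hg.mul_const (x ^ 5))).add
    (hh.mul_const (x ^ 6))

theorem forall_sq_mul_eq_iff (p q r p' q' r' : ℝ) :
    (∀ x : ℝ, x ^ 2 * (p * x ^ 4 + q * x ^ 5 + r * x ^ 6) = p' * x ^ 6 + q' * x ^ 7 + r' * x ^ 8)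
      ↔ p = p' ∧ q = q' ∧ r = r' := by
  constructor
  · intro h
    have h₁ := h 1
    have h₂ := h (-1)
    have h₃ := h 2
    norm_num at h₁ h₂ h₃
    exact ⟨by linarith, by linarith, by linarith⟩
  · rintro ⟨rfl, rfl, rfl⟩ x
    ring

theorem sl2_ansatz_reduction_general
    (I : Set ℝ)
    (φ4 φ5 φ6 : ℝ → ℝ)
    (h4 : ∀ t ∈ I, DifferentiableAt ℝ φ4 t)
    (h5 : ∀ t ∈ I, DifferentiableAt ℝ φ5 t)
    (h6 : ∀ t ∈ I, DifferentiableAt ℝ φ6 t)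
    (v : ℝ → ℝ → ℝ)
    (hv : ∀ t x : ℝ, v t x = 2 * x ^ 3 + φ4 t * x ^ 4 + φ5 t * x ^ 5 + φ6 t * x ^ 6) :
    (∀ t ∈ I, ∀ x : ℝ,
        x ^ 2 * deriv (fun s => v s x) t
          = v t x * deriv^[2] (v t) x - (5 / 6) * (deriv (v t) x) ^ 2
            + x ^ 2 * deriv (v t) x) ↔
      (∀ t ∈ I,
        deriv φ4 t = 7 * φ5 t - (4 / 3) * (φ4 t) ^ 2 ∧
        deriv φ5 t = 18 * φ6 t - (4 / 3) * φ4 t * φ5 t ∧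
        deriv φ6 t = -(5 / 6) * (φ5 t) ^ 2 + 2 * φ4 t * φ6 t) := by
  have hv_eq : v = fun t => sl2Ansatz (φ4 t) (φ5 t) (φ6 t) := funext fun t => funext (hv t)
  subst hv_eq
  refine forall₂_congr fun t ht => ?_
  have hvₜ x := ((h4 t ht).hasDerivAt.sl2Ansatz (h5 t ht).hasDerivAt (h6 t ht).hasDerivAt x).deriv
  simp only [hvₜ, sl2Ansatz_rhs]
  exact forall_sq_mul_eq_iff ..

/-- the ansatz `v = 2x³ + φ⁴(t)x⁴ + φ⁵(t)x⁵ + φ⁶(t)x⁶` solves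
`x²vₜ = v·vₓₓ − (5/6)(vₓ)² + x²vₓ` on `I × ℝ` iff `(φ⁴, φ⁵, φ⁶)` solves the reduced system
`φ⁴' = 7φ⁵ − (4/3)(φ⁴)²`, `φ⁵' = 18φ⁶ − (4/3)φ⁴φ⁵`, `φ⁶' = −(5/6)(φ⁵)² + 2φ⁴φ⁶` on `I`. -/
theorem sl2_ansatz_reduction
    (I : Set ℝ) (hI : IsOpen I) (hIc : I.OrdConnected)
    (φ4 φ5 φ6 : ℝ → ℝ)
    (h4 : ∀ t ∈ I, DifferentiableAt ℝ φ4 t)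
    (h5 : ∀ t ∈ I, DifferentiableAt ℝ φ5 t)
    (h6 : ∀ t ∈ I, DifferentiableAt ℝ φ6 t)
    (v : ℝ → ℝ → ℝ)
    (hv : ∀ t x : ℝ, v t x = 2 * x ^ 3 + φ4 t * x ^ 4 + φ5 t * x ^ 5 + φ6 t * x ^ 6) :
    (∀ t ∈ I, ∀ x : ℝ,
        x ^ 2 * deriv (fun s => v s x) t
          = v t x * deriv^[2] (v t) x - (5 / 6) * (deriv (v t) x) ^ 2
            + x ^ 2 * deriv (v t) x) ↔
      (∀ t ∈ I,
        deriv φ4 t = 7 * φ5 t - (4 / 3) * (φ4 t) ^ 2 ∧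
        deriv φ5 t = 18 * φ6 t - (4 / 3) * φ4 t * φ5 t ∧
        deriv φ6 t = -(5 / 6) * (φ5 t) ^ 2 + 2 * φ4 t * φ6 t) :=
  sl2_ansatz_reduction_general I φ4 φ5 φ6 h4 h5 h6 v hv
end

section
/- Let c₀, c₁, c₂ ∈ ℝ and let Ω be an open subset of {(t,x) ∈ ℝ² : x > 0 and c₀x⁴ + (24c₀t + c₁)x² + c₂ ≠ 0}. Then the function v(t,x) = √(2x)·(3c₀x⁴ + (24c₀t + c₁)x² − c₂)/(c₀x⁴ + (24c₀t + c₁)x² + c₂) solves the equation vₜ = vₓₓ − v³/x³ + (9/4)·v/x² on Ω. -/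
/-!
Writing `v = √(2x) · u` removes the square root: `v` solves `vₜ = vₓₓ − v³/x³ + (9/4)v/x²`
exactly when `u` solves `uₜ = uₓₓ + uₓ/x + 2(u − u³)/x²`. Here `u = N/D` with the even quartic
`D = c₀x⁴ + (24c₀t + c₁)x² + c₂` and `N = x Dₓ − D`, and `D` solves the linear equation
`Dₜ = 3(Dₓₓ − Dₓ/x)`; for such a `u` the reduced equation is a rational identity that
clearing denominators verifies.
-/

open Filter Topology

theorem deriv_iterate_two_eq_of_hasDerivAt {f f' : ℝ → ℝ} {x f'' : ℝ}
    (hf : ∀ᶠ y in 𝓝 x, HasDerivAt f (f' y) y) (hf' : HasDerivAt f' f'' x) :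
    deriv^[2] f x = f'' :=
  (hf'.congr_of_eventuallyEq (hf.mono fun _ hy => hy.deriv)).deriv

theorem deriv_iterate_two_div {p p' q q' : ℝ → ℝ} {x p'' q'' : ℝ}
    (hp : ∀ᶠ y in 𝓝 x, HasDerivAt p (p' y) y) (hp' : HasDerivAt p' p'' x)
    (hq : ∀ᶠ y in 𝓝 x, HasDerivAt q (q' y) y) (hq' : HasDerivAt q' q'' x) (hqx : q x ≠ 0) :
    deriv^[2] (fun z => p z / q z) x
      = (p'' * q x - p x * q'') / q x ^ 2
        - 2 * q' x * (p' x * q x - p x * q' x) / q x ^ 3 := by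
  have hq_ne : ∀ᶠ y in 𝓝 x, q y ≠ 0 := hq.self_of_nhds.continuousAt.eventually_ne hqx
  refine deriv_iterate_two_eq_of_hasDerivAt
    (f' := fun y => (p' y * q y - p y * q' y) / q y ^ 2) ?_
    ((((hp'.mul hq.self_of_nhds).sub (hp.self_of_nhds.mul hq')).fun_div
      (hq.self_of_nhds.fun_pow 2) (pow_ne_zero 2 hqx)).congr_deriv ?_)
  · filter_upwards [hp, hq, hq_ne] with y hpy hqy hqy0
    exact hpy.fun_div hqy hqy0
  · simp only [Pi.mul_apply, Pi.sub_apply]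
    field_simp
    ring

theorem hasDerivAt_sqrt_two_mul {x : ℝ} (hx : 0 < x) :
    HasDerivAt (fun z => √(2 * z)) (√(2 * x))⁻¹ x := by
  have hs : √(2 * x) ≠ 0 := by positivity
  refine ((Real.hasDerivAt_sqrt (by positivity)).comp x
    ((hasDerivAt_id x).const_mul 2)).congr_deriv ?_
  field_simp
  rfl

theorem deriv_iterate_two_sqrt_two_mul_mul {w : ℝ → ℝ} {x : ℝ} (hx : 0 < x)
    (hw : ContDiffAt ℝ 2 w x) :
    deriv^[2] (fun z => √(2 * z) * w z) x
      = √(2 * x) * (deriv^[2] w x + deriv w x / x - w x / (4 * x ^ 2)) := by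
  have hS := hasDerivAt_sqrt_two_mul hx
  have hw' : HasDerivAt (deriv w) (deriv^[2] w x) x :=
    ((hw.derivWithin (m := 1) (by norm_num)).differentiableAt (by norm_num)).hasDerivAt
  have hSx : √(2 * x) ^ 2 = 2 * x := Real.sq_sqrt (by positivity)
  have hs : √(2 * x) ≠ 0 := by positivity
  refine deriv_iterate_two_eq_of_hasDerivAt
    (f' := fun y => (√(2 * y))⁻¹ * w y + √(2 * y) * deriv w y) ?_
    (((hS.inv hs).mul (hw.differentiableAt (by norm_num)).hasDerivAt).add (hS.mul hw')
      |>.congr_deriv ?_)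
  · filter_upwards [eventually_gt_nhds hx, hw.eventually (by simp)] with y hy hwy
    exact (hasDerivAt_sqrt_two_mul hy).mul (hwy.differentiableAt (by norm_num)).hasDerivAt
  · simp only [Pi.inv_apply]
    field_simp
    linear_combination
      ((w x - 4 * x * deriv w x) * (√(2 * x) ^ 2 + 2 * x) + 8 * x ^ 2 * deriv w x) * hSx

theorem hasDerivAt_even_quartic (a b c y : ℝ) :
    HasDerivAt (fun z => a * z ^ 4 + b * z ^ 2 + c) (4 * a * y ^ 3 + 2 * b * y) y := by
  refine ((((hasDerivAt_pow 4 y).const_mul a).add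
    ((hasDerivAt_pow 2 y).const_mul b)).add_const c).congr_deriv ?_
  ring

theorem hasDerivAt_odd_cubic (a b y : ℝ) :
    HasDerivAt (fun z => a * z ^ 3 + b * z) (3 * a * y ^ 2 + b) y := by
  refine (((hasDerivAt_pow 3 y).const_mul a).add
    ((hasDerivAt_id y).const_mul b)).congr_deriv ?_
  simp only [mul_one]
  ring

noncomputable def quarticRatio (c₀ c₁ c₂ t x : ℝ) : ℝ :=
  (3 * c₀ * x ^ 4 + (24 * c₀ * t + c₁) * x ^ 2 - c₂) /
    (c₀ * x ^ 4 + (24 * c₀ * t + c₁) * x ^ 2 + c₂)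

section quarticRatio

variable {c₀ c₁ c₂ t x : ℝ}

theorem contDiffAt_quarticRatio (hD : c₀ * x ^ 4 + (24 * c₀ * t + c₁) * x ^ 2 + c₂ ≠ 0) :
    ContDiffAt ℝ 2 (quarticRatio c₀ c₁ c₂ t) x := by
  unfold quarticRatio
  fun_prop (disch := exact hD)

theorem hasDerivAt_quarticRatio_time
    (hD : c₀ * x ^ 4 + (24 * c₀ * t + c₁) * x ^ 2 + c₂ ≠ 0) :
    HasDerivAt (fun s => quarticRatio c₀ c₁ c₂ s x)
      (48 * c₀ * x ^ 2 * (c₂ - c₀ * x ^ 4) /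
        (c₀ * x ^ 4 + (24 * c₀ * t + c₁) * x ^ 2 + c₂) ^ 2) t := by
  have hb : HasDerivAt (fun s => (24 * c₀ * s + c₁) * x ^ 2) (24 * c₀ * x ^ 2) t := by
    simpa using (((hasDerivAt_id t).const_mul (24 * c₀)).add_const c₁).mul_const (x ^ 2)
  refine (((hb.const_add (3 * c₀ * x ^ 4)).sub_const c₂).fun_div
    ((hb.const_add (c₀ * x ^ 4)).add_const c₂) hD).congr_deriv ?_
  field_simp
  ring

theorem quarticRatio_reduced_equation (hx : x ≠ 0)
    (hD : c₀ * x ^ 4 + (24 * c₀ * t + c₁) * x ^ 2 + c₂ ≠ 0) :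
    deriv (fun s => quarticRatio c₀ c₁ c₂ s x) t
      = deriv^[2] (quarticRatio c₀ c₁ c₂ t) x + deriv (quarticRatio c₀ c₁ c₂ t) x / x
        + 2 * (quarticRatio c₀ c₁ c₂ t x - quarticRatio c₀ c₁ c₂ t x ^ 3) / x ^ 2 := by
  rw [(hasDerivAt_quarticRatio_time hD).deriv]
  unfold quarticRatio
  generalize 24 * c₀ * t + c₁ = b at hD ⊢
  have hN (y : ℝ) : HasDerivAt (fun z => 3 * c₀ * z ^ 4 + b * z ^ 2 - c₂)
      (4 * (3 * c₀) * y ^ 3 + 2 * b * y) y := by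
    simpa only [sub_eq_add_neg] using hasDerivAt_even_quartic (3 * c₀) b (-c₂) y
  have hD' (y : ℝ) := hasDerivAt_even_quartic c₀ b c₂ y
  rw [((hN x).fun_div (hD' x) hD).deriv,
    deriv_iterate_two_div (.of_forall hN) (hasDerivAt_odd_cubic _ _ x)
      (.of_forall hD') (hasDerivAt_odd_cubic _ _ x) hD]
  -- `field_simp` looks for the denominator's nonvanishing in this factored form
  have hD₂ : x ^ 2 * (c₀ * x ^ 2 + b) + c₂ ≠ 0 := by convert hD using 1; ring
  field_simp
  ring

end quarticRatio

theorem explicit_solution_of_semilinear_heat_general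
    (c₀ c₁ c₂ : ℝ) (Ω : Set (ℝ × ℝ))
    (hΩ' : ∀ q ∈ Ω, 0 < q.2 ∧ c₀ * q.2 ^ 4 + (24 * c₀ * q.1 + c₁) * q.2 ^ 2 + c₂ ≠ 0)
    (v : ℝ → ℝ → ℝ)
    (hv : ∀ t x : ℝ, v t x = Real.sqrt (2 * x) *
      (3 * c₀ * x ^ 4 + (24 * c₀ * t + c₁) * x ^ 2 - c₂) /
      (c₀ * x ^ 4 + (24 * c₀ * t + c₁) * x ^ 2 + c₂)) :
    ∀ q ∈ Ω, deriv (fun t => v t q.2) q.1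
      = deriv^[2] (v q.1) q.2 - (v q.1 q.2) ^ 3 / q.2 ^ 3
        + (9 / 4) * v q.1 q.2 / q.2 ^ 2 := by
  rintro ⟨t, x⟩ hq
  obtain ⟨hx, hD⟩ : 0 < x ∧ c₀ * x ^ 4 + (24 * c₀ * t + c₁) * x ^ 2 + c₂ ≠ 0 := hΩ' _ hq
  have hvu (s : ℝ) : v s = fun z => √(2 * z) * quarticRatio c₀ c₁ c₂ s z :=
    funext fun z => by rw [hv, quarticRatio, mul_div_assoc]
  have hS : √(2 * x) ^ 2 = 2 * x := Real.sq_sqrt (by positivity)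
  simp only [hvu, deriv_const_mul_field']
  rw [deriv_iterate_two_sqrt_two_mul_mul hx (contDiffAt_quarticRatio hD),
    quarticRatio_reduced_equation hx.ne' hD]
  field_simp
  linear_combination 4 * quarticRatio c₀ c₁ c₂ t x ^ 3 * hS

/-- the function `v = √(2x)·(3c₀x⁴ + (24c₀t + c₁)x² − c₂)/(c₀x⁴ + (24c₀t + c₁)x² + c₂)`
solves `vₜ = vₓₓ − v³/x³ + (9/4)v/x²` on any open set where `x > 0` and the denominator is
nonzero. -/
theorem explicit_solution_of_semilinear_heat
    (c₀ c₁ c₂ : ℝ) (Ω : Set (ℝ × ℝ)) (hΩ : IsOpen Ω)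
    (hΩ' : ∀ q ∈ Ω, 0 < q.2 ∧ c₀ * q.2 ^ 4 + (24 * c₀ * q.1 + c₁) * q.2 ^ 2 + c₂ ≠ 0)
    (v : ℝ → ℝ → ℝ)
    (hv : ∀ t x : ℝ, v t x = Real.sqrt (2 * x) *
      (3 * c₀ * x ^ 4 + (24 * c₀ * t + c₁) * x ^ 2 - c₂) /
      (c₀ * x ^ 4 + (24 * c₀ * t + c₁) * x ^ 2 + c₂)) :
    ∀ q ∈ Ω, deriv (fun t => v t q.2) q.1
      = deriv^[2] (v q.1) q.2 - (v q.1 q.2) ^ 3 / q.2 ^ 3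
        + (9 / 4) * v q.1 q.2 / q.2 ^ 2 :=
  explicit_solution_of_semilinear_heat_general c₀ c₁ c₂ Ω hΩ' v hv
end

section
/- Let Ω ⊆ ℝ × (0,∞) be open and let w be a smooth nowhere-vanishing function on Ω that satisfies both x³wₓₓₓ − 3xwₓ + 3w = 0 and wₜ = 3wₓₓ + (3/x)wₓ − (3/x²)w on Ω. Then the function v := √(2x³)·wₓ/w solves vₜ = vₓₓ − v³/x³ + (9/4)·v/x² on Ω. -/
set_option linter.unreachableTactic false
set_option linter.unusedTactic false
open Filter Topology ContDiff

private lemma sliceX {f : ℝ×ℝ → ℝ} {t x : ℝ} (hf : DifferentiableAt ℝ f (t, x)) :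
    HasDerivAt (fun y => f (t, y)) (fderiv ℝ f (t, x) (0, 1)) x := by
  simpa [Function.comp_def] using
    hf.hasFDerivAt.comp_hasDerivAt x (HasDerivAt.prodMk (hasDerivAt_const x t) (hasDerivAt_id x))

private lemma sliceT {f : ℝ×ℝ → ℝ} {t x : ℝ} (hf : DifferentiableAt ℝ f (t, x)) :
    HasDerivAt (fun s => f (s, x)) (fderiv ℝ f (t, x) (1, 0)) t := by
  simpa [Function.comp_def] using
    hf.hasFDerivAt.comp_hasDerivAt t (HasDerivAt.prodMk (hasDerivAt_id t) (hasDerivAt_const t x))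

private lemma mixed_symm {f : ℝ×ℝ → ℝ} {q : ℝ×ℝ} {s : Set (ℝ×ℝ)} (hs : IsOpen s) (hq : q ∈ s)
    (hf : ContDiffOn ℝ ∞ f s) (u v : ℝ×ℝ) :
    fderiv ℝ (fun p => fderiv ℝ f p u) q v = fderiv ℝ (fun p => fderiv ℝ f p v) q u := by
  have hf' : ContDiffOn ℝ ∞ (fderiv ℝ f) s := hf.fderiv_of_isOpen hs (by simp)
  have h'' : HasFDerivAt (fderiv ℝ f) (fderiv ℝ (fderiv ℝ f) q) q :=
    (((hf'.differentiableOn (by simp)).differentiableAt (hs.mem_nhds hq))).hasFDerivAt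
  have hev : ∀ᶠ y in 𝓝 q, HasFDerivAt f (fderiv ℝ f y) y := by
    filter_upwards [hs.eventually_mem hq] with y hy
    exact ((hf.differentiableOn (by simp)).differentiableAt (hs.mem_nhds hy)).hasFDerivAt
  have hsymm := second_derivative_symmetric_of_eventually hev h''
  have hu : HasFDerivAt (fun p => fderiv ℝ f p u)
      ((ContinuousLinearMap.apply ℝ ℝ u).comp (fderiv ℝ (fderiv ℝ f) q)) q :=
    (ContinuousLinearMap.apply ℝ ℝ u).hasFDerivAt.comp q h''
  have hv : HasFDerivAt (fun p => fderiv ℝ f p v)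
      ((ContinuousLinearMap.apply ℝ ℝ v).comp (fderiv ℝ (fderiv ℝ f) q)) q :=
    (ContinuousLinearMap.apply ℝ ℝ v).hasFDerivAt.comp q h''
  rw [hu.fderiv, hv.fderiv]
  exact hsymm v u

set_option maxHeartbeats 2000000 in
/-- if `w` is a smooth nowhere-vanishing function on an open set
`Ω ⊆ ℝ × (0,∞)` satisfying `x³wₓₓₓ − 3xwₓ + 3w = 0` and `wₜ = 3wₓₓ + (3/x)wₓ − (3/x²)w`,
then `v = √(2x³)·wₓ/w` solves `vₜ = vₓₓ − v³/x³ + (9/4)v/x²` on `Ω`. -/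
theorem differential_substitution_solution
    (Ω : Set (ℝ × ℝ)) (hΩ : IsOpen Ω) (hΩ' : ∀ q ∈ Ω, 0 < q.2)
    (w : ℝ → ℝ → ℝ)
    (hw : ContDiffOn ℝ (⊤ : ℕ∞) (fun q : ℝ × ℝ => w q.1 q.2) Ω)
    (hw0 : ∀ q ∈ Ω, w q.1 q.2 ≠ 0)
    (hode : ∀ q ∈ Ω,
      q.2 ^ 3 * deriv^[3] (w q.1) q.2 - 3 * q.2 * deriv (w q.1) q.2 + 3 * w q.1 q.2 = 0)
    (hpde : ∀ q ∈ Ω,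
      deriv (fun t => w t q.2) q.1
        = 3 * deriv^[2] (w q.1) q.2 + (3 / q.2) * deriv (w q.1) q.2
          - (3 / q.2 ^ 2) * w q.1 q.2)
    (v : ℝ → ℝ → ℝ)
    (hv : ∀ t x : ℝ, v t x = Real.sqrt (2 * x ^ 3) * deriv (w t) x / w t x) :
    ∀ q ∈ Ω, deriv (fun t => v t q.2) q.1
      = deriv^[2] (v q.1) q.2 - (v q.1 q.2) ^ 3 / q.2 ^ 3
        + (9 / 4) * v q.1 q.2 / q.2 ^ 2 := by
  intro q hq
  obtain ⟨t₀, x₀⟩ := q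
  set W : ℝ×ℝ → ℝ := fun q => w q.1 q.2 with hWdef
  have hWs : ContDiffOn ℝ ∞ W Ω := hw.of_le (by simp)
  set W1 : ℝ×ℝ → ℝ := fun p => fderiv ℝ W p (0,1) with hW1def
  set W2 : ℝ×ℝ → ℝ := fun p => fderiv ℝ W1 p (0,1) with hW2def
  set W3 : ℝ×ℝ → ℝ := fun p => fderiv ℝ W2 p (0,1) with hW3def
  set Wt : ℝ×ℝ → ℝ := fun p => fderiv ℝ W p (1,0) with hWtdef
  have hW1s : ContDiffOn ℝ ∞ W1 Ω :=
    (hWs.fderiv_of_isOpen hΩ (by simp)).clm_apply contDiffOn_const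
  have hW2s : ContDiffOn ℝ ∞ W2 Ω :=
    (hW1s.fderiv_of_isOpen hΩ (by simp)).clm_apply contDiffOn_const
  have hWts : ContDiffOn ℝ ∞ Wt Ω :=
    (hWs.fderiv_of_isOpen hΩ (by simp)).clm_apply contDiffOn_const
  have hdiff : ∀ (f : ℝ×ℝ → ℝ), ContDiffOn ℝ ∞ f Ω → ∀ p ∈ Ω, DifferentiableAt ℝ f p :=
    fun f hf p hp => (hf.differentiableOn (by simp)).differentiableAt (hΩ.mem_nhds hp)
  -- slice derivatives
  have hd1 : ∀ t x, (t,x) ∈ Ω → HasDerivAt (w t) (W1 (t,x)) x :=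
    fun t x h => sliceX (hdiff W hWs _ h)
  have hd2 : ∀ t x, (t,x) ∈ Ω → HasDerivAt (fun y => W1 (t,y)) (W2 (t,x)) x :=
    fun t x h => sliceX (hdiff W1 hW1s _ h)
  have hd3 : ∀ t x, (t,x) ∈ Ω → HasDerivAt (fun y => W2 (t,y)) (W3 (t,x)) x :=
    fun t x h => sliceX (hdiff W2 hW2s _ h)
  have hdT : ∀ t x, (t,x) ∈ Ω → HasDerivAt (fun s => w s x) (Wt (t,x)) t :=
    fun t x h => sliceT (hdiff W hWs _ h)
  have hnx : ∀ t x, (t,x) ∈ Ω → ∀ᶠ y in 𝓝 x, (t,y) ∈ Ω := fun t x h =>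
    (continuous_const.prodMk continuous_id).continuousAt.eventually_mem (hΩ.mem_nhds h)
  have hnt : ∀ t x, (t,x) ∈ Ω → ∀ᶠ s in 𝓝 t, (s,x) ∈ Ω := fun t x h =>
    (continuous_id.prodMk continuous_const).continuousAt.eventually_mem (hΩ.mem_nhds h)
  have hderiv1 : ∀ t x, (t,x) ∈ Ω → deriv (w t) x = W1 (t,x) :=
    fun t x h => (hd1 t x h).deriv
  have hderiv2 : ∀ t x, (t,x) ∈ Ω → deriv^[2] (w t) x = W2 (t,x) := by
    intro t x h
    have hev : deriv (w t) =ᶠ[𝓝 x] fun y => W1 (t,y) := by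
      filter_upwards [hnx t x h] with y hy using hderiv1 t y hy
    rw [show (2:ℕ) = 1 + 1 from rfl, Function.iterate_succ_apply',
      Function.iterate_one, hev.deriv_eq]
    exact (hd2 t x h).deriv
  have hderiv3 : ∀ t x, (t,x) ∈ Ω → deriv^[3] (w t) x = W3 (t,x) := by
    intro t x h
    have hev : deriv^[2] (w t) =ᶠ[𝓝 x] fun y => W2 (t,y) := by
      filter_upwards [hnx t x h] with y hy using hderiv2 t y hy
    rw [show (3:ℕ) = 2 + 1 from rfl, Function.iterate_succ_apply', hev.deriv_eq]
    exact (hd3 t x h).deriv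
  -- the PDE on Ω in terms of W's
  have hpdeΩ : ∀ t x, (t,x) ∈ Ω →
      Wt (t,x) = 3 * W2 (t,x) + (3/x) * W1 (t,x) - (3/x^2) * W (t,x) := by
    intro t x h
    rw [← (hdT t x h).deriv]
    have := hpde (t,x) h
    simp only at this
    rw [this, hderiv1 t x h, hderiv2 t x h]
  -- basic point facts
  have hx : 0 < x₀ := hΩ' (t₀,x₀) hq
  have hx0 : x₀ ≠ 0 := hx.ne'
  have hω0 : W (t₀,x₀) ≠ 0 := hw0 (t₀,x₀) hq
  have hs0 : Real.sqrt (2*x₀^3) ≠ 0 := by positivity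
  have hω0' : ∀ t x, (t,x) ∈ Ω → W (t,x) ≠ 0 := fun t x h => hw0 (t,x) h
  -- sqrt derivative
  have hsq : ∀ y : ℝ, 0 < y →
      HasDerivAt (fun y => Real.sqrt (2*y^3)) (3*y^2 / Real.sqrt (2*y^3)) y := by
    intro y hy
    have h2 : (2*y^3 : ℝ) ≠ 0 := by positivity
    have := (Real.hasDerivAt_sqrt h2).comp y ((hasDerivAt_pow 3 y).const_mul 2)
    refine this.congr_deriv ?_
    have : Real.sqrt (2*y^3) ≠ 0 := by positivity
    push_cast
    field_simp
  -- t-derivative of v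
  have hA1 : HasDerivAt (fun s => W1 (s, x₀)) (fderiv ℝ W1 (t₀,x₀) (1,0)) t₀ :=
    sliceT (hdiff W1 hW1s _ hq)
  have hWT : HasDerivAt (fun s => W (s, x₀)) (Wt (t₀,x₀)) t₀ := sliceT (hdiff W hWs _ hq)
  have hvt : deriv (fun t => v t x₀) t₀ =
      (Real.sqrt (2*x₀^3) * fderiv ℝ W1 (t₀,x₀) (1,0) * W (t₀,x₀)
        - Real.sqrt (2*x₀^3) * W1 (t₀,x₀) * Wt (t₀,x₀)) / W (t₀,x₀)^2 := by
    have hEq : (fun t => v t x₀) =ᶠ[𝓝 t₀]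
        fun t => Real.sqrt (2*x₀^3) * W1 (t,x₀) / W (t,x₀) := by
      filter_upwards [hnt t₀ x₀ hq] with t ht
      rw [hv, hderiv1 t x₀ ht]
    rw [hEq.deriv_eq]
    exact (((hA1.const_mul (Real.sqrt (2*x₀^3))).div hWT hω0)).deriv
  -- mixed partial via Clairaut
  have hRg : HasDerivAt (fun y => 3 * W2 (t₀,y) + 3/y * W1 (t₀,y) - 3/y^2 * W (t₀,y))
      (3 * W3 (t₀,x₀)
        + (((0 * x₀ - 3 * 1) / x₀ ^ 2) * W1 (t₀,x₀) + 3/x₀ * W2 (t₀,x₀))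
        - (((0 * x₀^2 - 3 * (2*x₀^1)) / (x₀^2) ^ 2) * W (t₀,x₀) + 3/x₀^2 * W1 (t₀,x₀))) x₀ := by
    have h1 := (hd3 t₀ x₀ hq).const_mul 3
    have h2 := ((hasDerivAt_const x₀ (3:ℝ)).div (hasDerivAt_id x₀) hx0).mul (hd2 t₀ x₀ hq)
    have h3 := ((hasDerivAt_const x₀ (3:ℝ)).div (hasDerivAt_pow 2 x₀) (by positivity)).mul
      (hd1 t₀ x₀ hq)
    have := (h1.add h2).sub h3
    refine this.congr_deriv ?_
    simp only [Pi.div_apply, id_eq]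
    push_cast
    ring
  have hAval : fderiv ℝ W1 (t₀,x₀) (1,0)
      = 3 * W3 (t₀,x₀)
        + (((0 * x₀ - 3 * 1) / x₀ ^ 2) * W1 (t₀,x₀) + 3/x₀ * W2 (t₀,x₀))
        - (((0 * x₀^2 - 3 * (2*x₀^1)) / (x₀^2) ^ 2) * W (t₀,x₀) + 3/x₀^2 * W1 (t₀,x₀)) := by
    have hsymm : fderiv ℝ W1 (t₀,x₀) (1,0) = fderiv ℝ Wt (t₀,x₀) (0,1) :=
      mixed_symm hΩ hq hWs (0,1) (1,0)
    rw [hsymm]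
    have hWtslice : HasDerivAt (fun y => Wt (t₀,y)) (fderiv ℝ Wt (t₀,x₀) (0,1)) x₀ :=
      sliceX (hdiff Wt hWts _ hq)
    have hEq : (fun y => Wt (t₀,y)) =ᶠ[𝓝 x₀]
        fun y => 3 * W2 (t₀,y) + 3/y * W1 (t₀,y) - 3/y^2 * W (t₀,y) := by
      filter_upwards [hnx t₀ x₀ hq] with y hy using hpdeΩ t₀ y hy
    rw [← hWtslice.deriv, hEq.deriv_eq]
    exact hRg.deriv
  -- second x-derivative of v
  set F : ℝ → ℝ := fun y => Real.sqrt (2*y^3) * W1 (t₀,y) / W (t₀,y) with hFdef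
  set G : ℝ → ℝ := fun y =>
      ((3*y^2 / Real.sqrt (2*y^3) * W1 (t₀,y) + Real.sqrt (2*y^3) * W2 (t₀,y)) * W (t₀,y)
        - Real.sqrt (2*y^3) * W1 (t₀,y) * W1 (t₀,y)) / W (t₀,y)^2 with hGdef
  have hFG : ∀ y, (t₀,y) ∈ Ω → HasDerivAt F (G y) y := by
    intro y hy
    exact (((hsq y (hΩ' (t₀,y) hy)).mul (hd2 t₀ y hy)).div (hd1 t₀ y hy) (hω0' t₀ y hy))
  -- derivative of G at x₀
  have hsqx := hsq x₀ hx
  have hterm1 : HasDerivAt (fun y => 3*y^2 / Real.sqrt (2*y^3))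
      ((3 * (2*x₀^1) * Real.sqrt (2*x₀^3) - 3*x₀^2 * (3*x₀^2 / Real.sqrt (2*x₀^3)))
        / (Real.sqrt (2*x₀^3))^2) x₀ := by
    have := ((hasDerivAt_pow 2 x₀).const_mul 3).div hsqx hs0
    refine this.congr_deriv ?_
    all_goals (push_cast; ring)
  -- numerator and denominator derivatives for G
  have ha := hd2 t₀ x₀ hq
  have hb := hd3 t₀ x₀ hq
  have hom := hd1 t₀ x₀ hq
  have hom' : HasDerivAt (fun y => W (t₀,y)) (W1 (t₀,x₀)) x₀ := hom
  have hN := (((hterm1.mul ha).add (hsqx.mul hb)).mul hom').sub ((hsqx.mul ha).mul ha)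
  have hden := hom'.pow 2
  have hden0 : W (t₀,x₀)^2 ≠ 0 := pow_ne_zero 2 hω0
  have hGd0 := hN.div hden hden0
  set S := Real.sqrt (2*x₀^3) with hSdef
  set aa := W1 (t₀,x₀) with haadef
  set bb := W2 (t₀,x₀) with hbbdef
  set cc := W3 (t₀,x₀) with hccdef
  set oo := W (t₀,x₀) with hoodef
  have hGd : HasDerivAt G
      (((6*x₀*S - 3*x₀^2*(3*x₀^2/S))/S^2) * aa/oo + 2*(3*x₀^2/S)*bb/oo + S*cc/oo
        - 2*(3*x₀^2/S)*aa^2/oo^2 - 3*S*aa*bb/oo^2 + 2*S*aa^3/oo^3) x₀ := by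
    refine hGd0.congr_deriv ?_
    simp only [Pi.mul_apply, Pi.add_apply, Pi.sub_apply, Pi.div_apply, Pi.pow_apply]
    rw [← hSdef, ← haadef, ← hbbdef, ← hoodef]
    push_cast
    field_simp
    ring
  have hvxx : deriv^[2] (v t₀) x₀ =
      ((6*x₀*S - 3*x₀^2*(3*x₀^2/S))/S^2) * aa/oo + 2*(3*x₀^2/S)*bb/oo + S*cc/oo
        - 2*(3*x₀^2/S)*aa^2/oo^2 - 3*S*aa*bb/oo^2 + 2*S*aa^3/oo^3 := by
    have hEqx : v t₀ =ᶠ[𝓝 x₀] F := by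
      filter_upwards [hnx t₀ x₀ hq] with y hy
      rw [hv, hderiv1 t₀ y hy]
    have hFG' : deriv F =ᶠ[𝓝 x₀] G := by
      filter_upwards [hnx t₀ x₀ hq] with y hy using (hFG y hy).deriv
    rw [show deriv^[2] (v t₀) x₀ = deriv (deriv (v t₀)) x₀ from rfl,
      (hEqx.deriv).deriv_eq, hFG'.deriv_eq]
    exact hGd.deriv
  have hvval : v t₀ x₀ = S * aa / oo := by rw [hv, hderiv1 t₀ x₀ hq]
  have hodeq : x₀^3 * cc - 3*x₀*aa + 3*oo = 0 := by
    have h := hode (t₀,x₀) hq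
    simp only at h
    rwa [hderiv1 t₀ x₀ hq, hderiv3 t₀ x₀ hq] at h
  have hτ : Wt (t₀,x₀) = 3*bb + 3/x₀*aa - 3/x₀^2*oo := hpdeΩ t₀ x₀ hq
  have hS2 : S^2 = 2*x₀^3 := Real.sq_sqrt (by positivity)
  have hcc : cc = (3*x₀*aa - 3*oo)/x₀^3 := by
    field_simp
    linarith [hodeq]
  show deriv (fun t => v t x₀) t₀
      = deriv^[2] (v t₀) x₀ - (v t₀ x₀) ^ 3 / x₀ ^ 3 + (9 / 4) * v t₀ x₀ / x₀ ^ 2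
  rw [hvt, hvxx, hvval, hAval, hτ, hcc]
  field_simp
  have e4 : S^4 = (2*x₀^3)^2 := by rw [show (4:ℕ)=2*2 from rfl, pow_mul, hS2]
  have e6 : S^6 = (2*x₀^3)^3 := by rw [show (6:ℕ)=2*3 from rfl, pow_mul, hS2]
  have e8 : S^8 = (2*x₀^3)^4 := by rw [show (8:ℕ)=2*4 from rfl, pow_mul, hS2]
  ring_nf
  simp only [e8, e6, e4, hS2]
  ring
end
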